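/- arXiv:0911.5263 — 10 statements merged into one kernel-verified Lean document; each statement's English description precedes it below -/
import Mathlib

section
/- Let A and B be nonempty subsets of a metric space (X,d). Then the pair (A,B) satisfies property UC if and only if for every ε > 0 there exists δ > 0 such that diam(A ∩ B̄(y, dist(A,B) + δ)) ≤ ε for every y ∈ B, where B̄(y,r) denotes the closed ball of center y and radius r. -/
open Filter Metric

/-- The distance between two sets: `inf {d(x,y) : x ∈ A, y ∈ B}`. -/
noncomputable def setDist {X : Type*} [PseudoMetricSpace X] (A B : Set X) : ℝ :=
  sInf (Set.image2 dist A B)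

/-- Property UC for a pair of subsets of a metric space. -/
def PropUC {X : Type*} [MetricSpace X] (A B : Set X) : Prop :=
  ∀ x x' y : ℕ → X, (∀ n, x n ∈ A) → (∀ n, x' n ∈ A) → (∀ n, y n ∈ B) →
    Tendsto (fun n => dist (x n) (y n)) atTop (nhds (setDist A B)) →
    Tendsto (fun n => dist (x' n) (y n)) atTop (nhds (setDist A B)) →
    Tendsto (fun n => dist (x n) (x' n)) atTop (nhds 0)

/-! A sequence realizing `setDist A B` eventually lies in every ball
`closedBall (y n) (setDist A B + δ)`, and conversely points of the balls of radius
`setDist A B + 1 / (n + 1)` form such sequences; so the UC conclusion for the sequences is the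
same as a uniform bound on the diameters of the slices of `A` cut out by these balls. -/

open Topology

section

variable {X : Type*}

theorem setDist_le_dist [PseudoMetricSpace X] {A B : Set X} {x y : X} (hx : x ∈ A)
    (hy : y ∈ B) : setDist A B ≤ dist x y :=
  csInf_le ⟨0, by rintro r ⟨a, -, b, -, rfl⟩; exact dist_nonneg⟩ ⟨x, hx, y, hy, rfl⟩

theorem Metric.exists_lt_dist_of_lt_diam [PseudoMetricSpace X] {s : Set X} {ε : ℝ}
    (hε : 0 ≤ ε) (h : ε < diam s) : ∃ x ∈ s, ∃ x' ∈ s, ε < dist x x' := by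
  by_contra! hle
  exact h.not_ge (diam_le_of_forall_dist_le hε hle)

theorem tendsto_dist_setDist_of_le [PseudoMetricSpace X] {A B : Set X} {x y : ℕ → X}
    {r : ℕ → ℝ} (hx : ∀ n, x n ∈ A) (hy : ∀ n, y n ∈ B) (hr : Tendsto r atTop (𝓝 0))
    (hxy : ∀ n, dist (x n) (y n) ≤ setDist A B + r n) :
    Tendsto (fun n => dist (x n) (y n)) atTop (𝓝 (setDist A B)) := by
  have hupper : Tendsto (fun n => setDist A B + r n) atTop (𝓝 (setDist A B)) := by
    simpa using tendsto_const_nhds.add hr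
  exact tendsto_of_tendsto_of_tendsto_of_le_of_le tendsto_const_nhds hupper
    (fun n => setDist_le_dist (hx n) (hy n)) hxy

variable [MetricSpace X] {A B : Set X}

theorem PropUC.uniform_diam_le (hUC : PropUC A B) :
    ∀ ε > 0, ∃ δ > 0, ∀ y ∈ B, diam (A ∩ closedBall y (setDist A B + δ)) ≤ ε := by
  by_contra! h
  obtain ⟨ε, hε, hlarge⟩ := h
  choose y hyB hy using fun n : ℕ => hlarge (1 / (n + 1 : ℝ)) Nat.one_div_pos_of_nat
  choose x hx x' hx' hxx' using fun n => exists_lt_dist_of_lt_diam hε.le (hy n)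
  have hr := tendsto_one_div_add_atTop_nhds_zero_nat (𝕜 := ℝ)
  have hlim : Tendsto (fun n => dist (x n) (x' n)) atTop (𝓝 0) :=
    hUC x x' y (fun n => (hx n).1) (fun n => (hx' n).1) hyB
      (tendsto_dist_setDist_of_le (fun n => (hx n).1) hyB hr fun n => (hx n).2)
      (tendsto_dist_setDist_of_le (fun n => (hx' n).1) hyB hr fun n => (hx' n).2)
  obtain ⟨n, hn⟩ := (hlim.eventually (gt_mem_nhds hε)).exists
  exact (hxx' n).not_gt hn

theorem PropUC.of_uniform_diam_le
    (h : ∀ ε > 0, ∃ δ > 0, ∀ y ∈ B, diam (A ∩ closedBall y (setDist A B + δ)) ≤ ε) :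
    PropUC A B := by
  intro x x' y hxA hx'A hyB hx hx'
  refine (nhds_basis_closedBall.tendsto_right_iff).2 fun ε hε => ?_
  obtain ⟨δ, hδ, hdiam⟩ := h ε hε
  have hlt : setDist A B < setDist A B + δ := lt_add_of_pos_right _ hδ
  filter_upwards [hx.eventually_lt_const hlt, hx'.eventually_lt_const hlt] with n h1 h2
  have hbdd : Bornology.IsBounded (A ∩ closedBall (y n) (setDist A B + δ)) :=
    isBounded_closedBall.subset Set.inter_subset_right
  rw [mem_closedBall, dist_zero_right, Real.norm_of_nonneg dist_nonneg]
  exact (dist_le_diam_of_mem hbdd ⟨hxA n, h1.le⟩ ⟨hx'A n, h2.le⟩).trans (hdiam (y n) (hyB n))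

end

theorem prop_UC_iff_uniform_diam_general {X : Type*} [MetricSpace X] (A B : Set X) :
    PropUC A B ↔
      ∀ ε > 0, ∃ δ > 0, ∀ y ∈ B,
        Metric.diam (A ∩ Metric.closedBall y (setDist A B + δ)) ≤ ε :=
  ⟨PropUC.uniform_diam_le, PropUC.of_uniform_diam_le⟩

theorem prop_UC_iff_uniform_diam {X : Type*} [MetricSpace X] (A B : Set X)
    (hA : A.Nonempty) (hB : B.Nonempty) :
    PropUC A B ↔
      ∀ ε > 0, ∃ δ > 0, ∀ y ∈ B,
        Metric.diam (A ∩ Metric.closedBall y (setDist A B + δ)) ≤ ε :=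
  prop_UC_iff_uniform_diam_general A B
end

section
/- Let (X,d) be a uniquely geodesic metric space which is uniformly convex with a monotone modulus of convexity δ(r,ε). Let A and B be two nonempty subsets of X with A convex. Then the pair (A,B) has property UC. -/
open Filter Metric

/-- `c` is a geodesic joining `x` to `y`: an isometric map of `[0, d(x,y)]` into `X`
with `c 0 = x` and `c (d(x,y)) = y`. -/
def IsGeodesic {X : Type*} [MetricSpace X] (x y : X) (c : ℝ → X) : Prop :=
  c 0 = x ∧ c (dist x y) = y ∧
    ∀ s ∈ Set.Icc (0 : ℝ) (dist x y), ∀ t ∈ Set.Icc (0 : ℝ) (dist x y),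
      dist (c s) (c t) = |s - t|

/-- A uniquely geodesic space: every two points are joined by a geodesic, and any two
geodesics joining the same pair of points coincide on `[0, d(x,y)]`. -/
def UniquelyGeodesicSpace (X : Type*) [MetricSpace X] : Prop :=
  ∀ x y : X, (∃ c, IsGeodesic x y c) ∧
    ∀ c c', IsGeodesic x y c → IsGeodesic x y c' →
      ∀ t ∈ Set.Icc (0 : ℝ) (dist x y), c t = c' t

/-- The geodesic segment `[x,y]`: the union of the images of `[0,d(x,y)]` under all
geodesics joining `x` to `y`. -/
def geodesicSegment {X : Type*} [MetricSpace X] (x y : X) : Set X :=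
  {z | ∃ c, IsGeodesic x y c ∧ ∃ t ∈ Set.Icc (0 : ℝ) (dist x y), c t = z}

/-- `m` is a midpoint of `x` and `y`: it lies on the geodesic segment `[x,y]` and is
equidistant from `x` and `y`. -/
def IsMidpoint {X : Type*} [MetricSpace X] (x y m : X) : Prop :=
  m ∈ geodesicSegment x y ∧ dist x m = dist x y / 2 ∧ dist y m = dist x y / 2

/-- A subset of a geodesic space is convex if it contains the geodesic segment
joining any two of its points. -/
def GeodesicConvex {X : Type*} [MetricSpace X] (A : Set X) : Prop :=
  ∀ x ∈ A, ∀ y ∈ A, geodesicSegment x y ⊆ A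

/-- `X` is uniformly convex with modulus `δ : (0,∞) × (0,2] → (0,1]`. -/
def UniformlyConvexWith (X : Type*) [MetricSpace X] (δ : ℝ → ℝ → ℝ) : Prop :=
  (∀ r > (0 : ℝ), ∀ ε ∈ Set.Ioc (0 : ℝ) 2, δ r ε ∈ Set.Ioc (0 : ℝ) 1) ∧
  ∀ a x y m : X, ∀ r > (0 : ℝ), ∀ ε ∈ Set.Ioc (0 : ℝ) 2,
    dist x a ≤ r → dist y a ≤ r → ε * r ≤ dist x y → IsMidpoint x y m →
      dist m a ≤ (1 - δ r ε) * r

/-- The modulus `δ` is monotone: for each fixed `ε` it is nonincreasing in `r`. -/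
def MonotoneModulus (δ : ℝ → ℝ → ℝ) : Prop :=
  ∀ ε ∈ Set.Ioc (0 : ℝ) 2, ∀ r₁ r₂ : ℝ, 0 < r₁ → r₁ ≤ r₂ → δ r₂ ε ≤ δ r₁ ε

/-!
Let `D = dist(A,B) > 0`. If `p, p' ∈ A` are `ε` apart and both lie within `D + θ` of `q ∈ B`,
uniform convexity puts their midpoint, which lies in `A`, within `(1 - η)(D + θ)` of `q` for
some `η > 0`; for small `θ` this is less than `D`, which is impossible. Since `δ` is
nonincreasing in the radius, the modulus at the fixed radius `R = 2D` bounds the moduli at all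
radii in `[D, D + θ]`, so `θ` depends on `ε` only, which is exactly property UC.
-/

section

variable {X : Type*} [MetricSpace X]

lemma setDist_nonneg (A B : Set X) : 0 ≤ setDist A B :=
  Real.sInf_nonneg (by rintro _ ⟨a, -, b, -, rfl⟩; exact dist_nonneg)

lemma setDist_le_dist_s1 {A B : Set X} {a b : X} (ha : a ∈ A) (hb : b ∈ B) :
    setDist A B ≤ dist a b :=
  csInf_le ⟨0, by rintro _ ⟨a, -, b, -, rfl⟩; exact dist_nonneg⟩ ⟨a, ha, b, hb, rfl⟩

lemma IsGeodesic.isMidpoint {x y : X} {c : ℝ → X} (hc : IsGeodesic x y c) :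
    IsMidpoint x y (c (dist x y / 2)) := by
  obtain ⟨hc0, hcd, hiso⟩ := hc
  have hd : (0 : ℝ) ≤ dist x y := dist_nonneg
  have hmid : dist x y / 2 ∈ Set.Icc (0 : ℝ) (dist x y) := ⟨by linarith, by linarith⟩
  refine ⟨⟨c, ⟨hc0, hcd, hiso⟩, _, hmid, rfl⟩, ?_, ?_⟩
  · have h := hiso 0 ⟨le_rfl, hd⟩ _ hmid
    rwa [hc0, zero_sub, abs_neg, abs_of_nonneg (by linarith)] at h
  · have h := hiso _ ⟨hd, le_rfl⟩ _ hmid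
    rw [hcd, abs_of_nonneg (by linarith)] at h
    linarith

lemma UniquelyGeodesicSpace.exists_isMidpoint (hX : UniquelyGeodesicSpace X) (x y : X) :
    ∃ m, IsMidpoint x y m :=
  let ⟨_, hc⟩ := (hX x y).1
  ⟨_, hc.isMidpoint⟩

lemma UniformlyConvexWith.dist_midpoint_le {δ : ℝ → ℝ → ℝ} (hδ : UniformlyConvexWith X δ)
    (hδmono : MonotoneModulus δ) {a x y m : X} {r R κ : ℝ} (hr : 0 < r) (hrR : r ≤ R)
    (hκ : κ ∈ Set.Ioc (0 : ℝ) 2) (hx : dist x a ≤ r) (hy : dist y a ≤ r)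
    (hxy : κ * R ≤ dist x y) (hm : IsMidpoint x y m) :
    dist m a ≤ (1 - δ R κ) * r :=
  calc dist m a ≤ (1 - δ r κ) * r :=
        hδ.2 a x y m r hr κ hκ hx hy ((mul_le_mul_of_nonneg_left hrR hκ.1.le).trans hxy) hm
    _ ≤ (1 - δ R κ) * r := by
        gcongr
        exact hδmono κ hκ r R hr hrR

lemma GeodesicConvex.exists_forall_dist_lt {δ : ℝ → ℝ → ℝ}
    (hmid : ∀ x y : X, ∃ m, IsMidpoint x y m) (hδ : UniformlyConvexWith X δ) (hδmono : MonotoneModulus δ) {A B : Set X}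
    (hA : GeodesicConvex A) {ε : ℝ} (hε : 0 < ε) :
    ∃ θ > 0, ∀ p ∈ A, ∀ p' ∈ A, ∀ q ∈ B, dist p q < setDist A B + θ →
      dist p' q < setDist A B + θ → dist p p' < ε := by
  set D := setDist A B
  rcases (setDist_nonneg A B).eq_or_lt with hD | hD
  · refine ⟨ε / 2, half_pos hε, fun p _ p' _ q _ hp hp' => ?_⟩
    linarith [dist_triangle_right p p' q]
  set R := 2 * D
  have hR : 0 < R := by positivity
  set κ := min (ε / R) 2
  have hκ : κ ∈ Set.Ioc (0 : ℝ) 2 := ⟨lt_min (div_pos hε hR) two_pos, min_le_right _ _⟩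
  set η := δ R κ
  have hη : η ∈ Set.Ioc (0 : ℝ) 1 := hδ.1 R hR κ hκ
  refine ⟨η * D / 2, by nlinarith [hη.1], fun p hp p' hp' q hq hpq hp'q => ?_⟩
  by_contra! hpp'
  obtain ⟨m, hm⟩ := hmid p p'
  set r := max (dist p q) (dist p' q)
  have hDr : D ≤ r := (setDist_le_dist_s1 hp hq).trans (le_max_left _ _)
  have hrθ : r < D + η * D / 2 := max_lt hpq hp'q
  have hκR : κ * R ≤ dist p p' := by
    calc κ * R ≤ ε / R * R := by gcongr; exact min_le_left _ _
      _ = ε := div_mul_cancel₀ ε hR.ne'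
      _ ≤ dist p p' := hpp'
  have hmq : dist m q ≤ (1 - η) * r :=
    hδ.dist_midpoint_le hδmono (hD.trans_le hDr) (by nlinarith [hη.2]) hκ
      (le_max_left _ _) (le_max_right _ _) hκR hm
  refine lt_irrefl D ?_
  calc D ≤ dist m q := setDist_le_dist_s1 (hA p hp p' hp' hm.1) hq
    _ ≤ (1 - η) * r := hmq
    _ ≤ (1 - η) * (D + η * D / 2) := by gcongr; linarith [hη.2]
    _ < D := by nlinarith [hη.1]

end

theorem prop_UC_of_uniformly_convex_general {X : Type*} [MetricSpace X]
    (hX : UniquelyGeodesicSpace X) (δ : ℝ → ℝ → ℝ)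
    (hδ : UniformlyConvexWith X δ) (hδmono : MonotoneModulus δ)
    (A B : Set X) (hAconv : GeodesicConvex A) :
    PropUC A B := by
  intro x x' y hx hx' hy hxy hx'y
  refine Metric.tendsto_nhds.2 fun ε hε => ?_
  obtain ⟨θ, hθ, hclose⟩ := hAconv.exists_forall_dist_lt hX.exists_isMidpoint hδ hδmono hε
  filter_upwards [hxy.eventually (gt_mem_nhds (lt_add_of_pos_right _ hθ)),
    hx'y.eventually (gt_mem_nhds (lt_add_of_pos_right _ hθ))] with n hn hn'
  rw [Real.dist_0_eq_abs, abs_of_nonneg dist_nonneg]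
  exact hclose _ (hx n) _ (hx' n) _ (hy n) hn hn'

theorem prop_UC_of_uniformly_convex {X : Type*} [MetricSpace X]
    (hX : UniquelyGeodesicSpace X) (δ : ℝ → ℝ → ℝ)
    (hδ : UniformlyConvexWith X δ) (hδmono : MonotoneModulus δ)
    (A B : Set X) (hA : A.Nonempty) (hB : B.Nonempty) (hAconv : GeodesicConvex A) :
    PropUC A B :=
  prop_UC_of_uniformly_convex_general hX δ hδ hδmono A B hAconv
end

section
/- Let A and B be nonempty subsets of a metric space (X,d). If the pair (A,B) has property WUC, then for every y ∈ B, lim_{ε→0} diam(A ∩ B̄(y, dist(A,B) + ε)) = 0, where B̄(y,r) is the closed ball of center y and radius r. -/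
/-!
Suppose the diameters do not shrink. Then for some `δ > 0` there are points `aₙ, bₙ ∈ A`, both within
`dist(A,B) + 1/(n+1)` of `y`, with `d(aₙ, bₙ) > δ`. The interleaved sequence `a₀, b₀, a₁, b₁, …` still
satisfies the hypothesis of WUC with the single point `y`, hence converges and is Cauchy, which forces
`d(aₙ, bₙ) → 0`.
-/

open Filter Metric

/-- Property WUC for a pair of subsets of a metric space. -/
def PropWUC {X : Type*} [MetricSpace X] (A B : Set X) : Prop :=
  ∀ x : ℕ → X, (∀ n, x n ∈ A) →
    (∀ ε > (0 : ℝ), ∃ y ∈ B, ∃ m₀ : ℕ, ∀ m ≥ m₀, dist (x m) y ≤ setDist A B + ε) →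
    ∃ z, Tendsto x atTop (nhds z)

open Topology

section Interleave

variable {X : Type*}

def interleave (a b : ℕ → X) (n : ℕ) : X := if Even n then a (n / 2) else b (n / 2)

@[simp]
lemma interleave_two_mul (a b : ℕ → X) (n : ℕ) : interleave a b (2 * n) = a n := by
  simp [interleave]

@[simp]
lemma interleave_two_mul_add_one (a b : ℕ → X) (n : ℕ) : interleave a b (2 * n + 1) = b n := by
  simp [interleave, Nat.mul_add_div]

lemma interleave_mem {s : Set X} {a b : ℕ → X} (ha : ∀ n, a n ∈ s) (hb : ∀ n, b n ∈ s) (n : ℕ) :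
    interleave a b n ∈ s := by
  unfold interleave
  split
  exacts [ha _, hb _]

lemma eventually_interleave {p : X → Prop} {a b : ℕ → X} (ha : ∀ᶠ n in atTop, p (a n))
    (hb : ∀ᶠ n in atTop, p (b n)) : ∀ᶠ n in atTop, p (interleave a b n) := by
  have hhalf := Nat.tendsto_div_const_atTop (n := 2) two_ne_zero
  filter_upwards [hhalf.eventually ha, hhalf.eventually hb] with n han hbn
  unfold interleave
  split
  exacts [han, hbn]

lemma CauchySeq.tendsto_dist_of_interleave [PseudoMetricSpace X] {a b : ℕ → X}
    (h : CauchySeq (interleave a b)) : Tendsto (fun n => dist (a n) (b n)) atTop (𝓝 0) := by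
  have hpairs : Tendsto (fun n : ℕ => (2 * n, 2 * n + 1)) atTop atTop := by
    rw [← prod_atTop_atTop_eq]
    exact (tendsto_id.const_mul_atTop' two_pos).prodMk (tendsto_add_atTop_nat 1 |>.comp
      (tendsto_id.const_mul_atTop' two_pos))
  simpa [Function.comp_def] using (cauchySeq_iff_tendsto_dist_atTop_0.1 h).comp hpairs

end Interleave

lemma tendsto_diam_nhdsGT_zero {X : Type*} [PseudoMetricSpace X] {S : ℝ → Set X} (hS : Monotone S)
    (h : ∀ δ > 0, ∃ ε > 0, ∀ x ∈ S ε, ∀ x' ∈ S ε, dist x x' ≤ δ) :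
    Tendsto (fun ε => diam (S ε)) (𝓝[>] 0) (𝓝 0) := by
  refine tendsto_order.2 ⟨fun c hc => .of_forall fun _ => hc.trans_le diam_nonneg, fun δ hδ => ?_⟩
  obtain ⟨ε, hε, hdist⟩ := h (δ / 2) (half_pos hδ)
  filter_upwards [Ioo_mem_nhdsGT hε] with ε' hε'
  have hsub : S ε' ⊆ S ε := hS hε'.2.le
  calc diam (S ε') ≤ δ / 2 :=
        diam_le_of_forall_dist_le (half_pos hδ).le fun x hx x' hx' => hdist x (hsub hx) x' (hsub hx')
    _ < δ := half_lt_self hδ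

namespace PropWUC

variable {X : Type*} [MetricSpace X] {A B : Set X}

lemma cauchySeq (hWUC : PropWUC A B) {x : ℕ → X} (hxA : ∀ n, x n ∈ A) {y : X} (hy : y ∈ B)
    (hxy : ∀ ε > 0, ∀ᶠ n in atTop, x n ∈ closedBall y (setDist A B + ε)) : CauchySeq x := by
  obtain ⟨z, hz⟩ := hWUC x hxA fun ε hε => ⟨y, hy, eventually_atTop.1 (hxy ε hε)⟩
  exact hz.cauchySeq

lemma tendsto_dist (hWUC : PropWUC A B) {a b : ℕ → X} (haA : ∀ n, a n ∈ A) (hbA : ∀ n, b n ∈ A)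
    {y : X} (hy : y ∈ B) (hay : ∀ ε > 0, ∀ᶠ n in atTop, a n ∈ closedBall y (setDist A B + ε))
    (hby : ∀ ε > 0, ∀ᶠ n in atTop, b n ∈ closedBall y (setDist A B + ε)) :
    Tendsto (fun n => dist (a n) (b n)) atTop (𝓝 0) :=
  (hWUC.cauchySeq (interleave_mem haA hbA) hy fun ε hε =>
    eventually_interleave (hay ε hε) (hby ε hε)).tendsto_dist_of_interleave

lemma exists_forall_dist_le (hWUC : PropWUC A B) {y : X} (hy : y ∈ B) {δ : ℝ} (hδ : 0 < δ) :
    ∃ ε > 0, ∀ x ∈ A ∩ closedBall y (setDist A B + ε),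
      ∀ x' ∈ A ∩ closedBall y (setDist A B + ε), dist x x' ≤ δ := by
  by_contra! hfar
  choose a ha b hb hab using fun n : ℕ => hfar (1 / (n + 1)) Nat.one_div_pos_of_nat
  have hshrink : ∀ ε > 0, ∀ᶠ n : ℕ in atTop, (1 / (n + 1) : ℝ) ≤ ε := fun ε hε =>
    (tendsto_one_div_add_atTop_nhds_zero_nat.eventually (gt_mem_nhds hε)).mono fun _ => le_of_lt
  have hnear {c : ℕ → X} (hc : ∀ n : ℕ, c n ∈ A ∩ closedBall y (setDist A B + 1 / (n + 1))) :
      ∀ ε > 0, ∀ᶠ n in atTop, c n ∈ closedBall y (setDist A B + ε) := fun ε hε =>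
    (hshrink ε hε).mono fun n hn => closedBall_subset_closedBall (by linarith) (hc n).2
  have hlim := hWUC.tendsto_dist (fun n => (ha n).1) (fun n => (hb n).1) hy (hnear ha) (hnear hb)
  obtain ⟨n, hn⟩ := ((hlim.eventually (gt_mem_nhds hδ)).and (.of_forall hab)).exists
  exact hn.1.not_gt hn.2

end PropWUC

theorem diam_tendsto_zero_of_prop_WUC_general {X : Type*} [MetricSpace X] (A B : Set X)
    (hWUC : PropWUC A B) :
    ∀ y ∈ B,
      Tendsto (fun ε : ℝ => Metric.diam (A ∩ Metric.closedBall y (setDist A B + ε)))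
        (nhdsWithin 0 (Set.Ioi 0)) (nhds 0) := fun y hy =>
  tendsto_diam_nhdsGT_zero
    (fun _ _ hε => Set.inter_subset_inter_right _ (closedBall_subset_closedBall (by linarith)))
    fun _ hδ => hWUC.exists_forall_dist_le hy hδ

theorem diam_tendsto_zero_of_prop_WUC {X : Type*} [MetricSpace X] (A B : Set X)
    (hA : A.Nonempty) (hB : B.Nonempty) (hWUC : PropWUC A B) :
    ∀ y ∈ B,
      Tendsto (fun ε : ℝ => Metric.diam (A ∩ Metric.closedBall y (setDist A B + ε)))
        (nhdsWithin 0 (Set.Ioi 0)) (nhds 0) :=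
  diam_tendsto_zero_of_prop_WUC_general A B hWUC
end

section
/- Let (X,d) be a metric space and let A and B be two nonempty subsets of X such that the pair (A,B) satisfies property W-WUC. Assume that A is complete and that A is a Chebyshev set with respect to B. Let T be a cyclic contraction on A∪B. Then T has a unique best proximity point z in A, and the sequence {T^{2n}x} converges to z for every x ∈ A. -/
open Filter Metric Topology

/-- Property W-WUC for a pair of subsets of a metric space. -/
def PropWWUC {X : Type*} [MetricSpace X] (A B : Set X) : Prop :=
  ∀ x : ℕ → X, (∀ n, x n ∈ A) →
    (∀ ε > (0 : ℝ), ∃ y ∈ B, ∃ n₀ : ℕ, ∀ n ≥ n₀, dist (x n) y ≤ setDist A B + ε) →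
    ∃ z, ∃ φ : ℕ → ℕ, StrictMono φ ∧ Tendsto (x ∘ φ) atTop (nhds z)

/-- `T` is a cyclic contraction on `A ∪ B`. -/
def CyclicContraction {X : Type*} [MetricSpace X] (A B : Set X) (T : X → X) : Prop :=
  Set.MapsTo T A B ∧ Set.MapsTo T B A ∧ ∃ k : ℝ, 0 < k ∧ k < 1 ∧
    ∀ x ∈ A, ∀ y ∈ B, dist (T x) (T y) ≤ k * dist x y + (1 - k) * setDist A B

/-- `A` is a Chebyshev set with respect to `B`: `P_A(x)` is a singleton for every
`x ∈ B`. -/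
def ChebyshevWrt {X : Type*} [MetricSpace X] (A B : Set X) : Prop :=
  ∀ x ∈ B, ∃! y, y ∈ A ∧ dist x y = Metric.infDist x A

theorem best_proximity_of_prop_WWUC {X : Type*} [MetricSpace X] (A B : Set X)
    (hA : A.Nonempty) (hB : B.Nonempty) (hWWUC : PropWWUC A B)
    (hAcomplete : IsComplete A) (hcheb : ChebyshevWrt A B)
    (T : X → X) (hT : CyclicContraction A B T) :
    ∃ z ∈ A, dist z (T z) = setDist A B ∧
      (∀ z' ∈ A, dist z' (T z') = setDist A B → z' = z) ∧
      ∀ x ∈ A, Tendsto (fun n => T^[2 * n] x) atTop (nhds z) := by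
  obtain ⟨hTA, hTB, k, hk0, hk1, hcontr⟩ := hT
  set δ := setDist A B with hδdef
  have hbdd : BddBelow (Set.image2 dist A B) := by
    refine ⟨0, ?_⟩
    rintro r ⟨a, _, b, _, rfl⟩
    exact dist_nonneg
  have hδ0 : 0 ≤ δ := by
    apply Real.sInf_nonneg
    rintro r ⟨a, _, b, _, rfl⟩
    exact dist_nonneg
  have hlow : ∀ a ∈ A, ∀ b ∈ B, δ ≤ dist a b := fun a ha b hb =>
    csInf_le hbdd ⟨a, ha, b, hb, rfl⟩
  have hstep : ∀ a b, (a ∈ A ∧ b ∈ B) ∨ (a ∈ B ∧ b ∈ A) →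
      dist (T a) (T b) ≤ k * dist a b + (1 - k) * δ := by
    rintro a b (⟨ha, hb⟩ | ⟨ha, hb⟩)
    · exact hcontr a ha b hb
    · rw [dist_comm, dist_comm a b]
      exact hcontr b hb a ha
  have hmem : ∀ x ∈ A, ∀ n : ℕ, T^[2 * n] x ∈ A ∧ T^[2 * n + 1] x ∈ B := by
    intro x hx n
    induction n with
    | zero => simpa using ⟨hx, hTA hx⟩
    | succ n ih =>
      have e1 : 2 * (n + 1) = (2 * n + 1) + 1 := by ring
      constructor
      · rw [e1, Function.iterate_succ_apply']
        exact hTB ih.2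
      · rw [Function.iterate_succ_apply', e1, Function.iterate_succ_apply']
        exact hTA (hTB ih.2)
  have hpeel : ∀ p : ℕ, ∀ a b, (a ∈ A ∧ b ∈ B) ∨ (a ∈ B ∧ b ∈ A) →
      dist (T^[p] a) (T^[p] b) ≤ k ^ p * dist a b + (1 - k ^ p) * δ := by
    intro p
    induction p with
    | zero => simp
    | succ p ih =>
      intro a b hab
      have hab' : (T a ∈ A ∧ T b ∈ B) ∨ (T a ∈ B ∧ T b ∈ A) := by
        rcases hab with ⟨ha, hb⟩ | ⟨ha, hb⟩
        · exact Or.inr ⟨hTA ha, hTB hb⟩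
        · exact Or.inl ⟨hTB ha, hTA hb⟩
      have h1 := ih (T a) (T b) hab'
      have h2 := hstep a b hab
      have hkp : (0:ℝ) ≤ k ^ p := pow_nonneg hk0.le p
      rw [Function.iterate_succ_apply, Function.iterate_succ_apply]
      calc dist (T^[p] (T a)) (T^[p] (T b)) ≤ k ^ p * dist (T a) (T b) + (1 - k ^ p) * δ := h1
        _ ≤ k ^ p * (k * dist a b + (1 - k) * δ) + (1 - k ^ p) * δ := by nlinarith
        _ = k ^ (p + 1) * dist a b + (1 - k ^ (p + 1)) * δ := by ring
  -- c_n bound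
  have hc : ∀ x ∈ A, ∀ n : ℕ, dist (T^[n] x) (T^[n + 1] x) ≤ δ + k ^ n * dist x (T x) := by
    intro x hx n
    have h1 := hpeel n x (T x) (Or.inl ⟨hx, hTA hx⟩)
    rw [← Function.iterate_succ_apply] at h1
    have hkn : k ^ n ≤ 1 := pow_le_one₀ hk0.le hk1.le
    have hkn0 : (0:ℝ) ≤ k ^ n := pow_nonneg hk0.le n
    nlinarith
  -- bounded orbit
  have hbound : ∀ x ∈ A, ∃ M : ℝ, 0 ≤ M ∧ ∀ j : ℕ, dist (T^[2 * j + 1] x) x ≤ M := by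
    intro x hx
    have h1k : (0:ℝ) < 1 - k := by linarith
    set c0 := dist x (T x) with hc0def
    have hc00 : 0 ≤ c0 := dist_nonneg
    refine ⟨(3 * c0 + 2 * δ) / (1 - k), by positivity, ?_⟩
    set M := (3 * c0 + 2 * δ) / (1 - k) with hMdef
    have hMmul : (1 - k) * M = 3 * c0 + 2 * δ := by
      rw [hMdef]; field_simp
    have hM0 : 0 ≤ M := by positivity
    intro j
    induction j with
    | zero =>
      simp only [Nat.mul_zero, Nat.zero_add, Function.iterate_one]
      rw [dist_comm]
      nlinarith
    | succ j ih =>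
      have e1 : 2 * (j + 1) + 1 = (2 * j + 2) + 1 := by ring
      have e2 : 2 * j + 2 = (2 * j + 1) + 1 := by ring
      have t0 : dist (T^[2 * (j + 1) + 1] x) x ≤
          dist (T^[2 * (j + 1) + 1] x) (T^[2 * j + 2] x) + dist (T^[2 * j + 2] x) (T x)
            + dist (T x) x := dist_triangle4 _ _ _ _
      have t1 : dist (T^[2 * (j + 1) + 1] x) (T^[2 * j + 2] x) ≤ δ + c0 := by
        rw [e1, dist_comm]
        have := hc x hx (2 * j + 2)
        have hkn : k ^ (2 * j + 2) ≤ 1 := pow_le_one₀ hk0.le hk1.le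
        have hkn0 : (0:ℝ) ≤ k ^ (2 * j + 2) := pow_nonneg hk0.le _
        nlinarith
      have t2 : dist (T^[2 * j + 2] x) (T x) ≤ k * dist (T^[2 * j + 1] x) x + (1 - k) * δ := by
        rw [e2, Function.iterate_succ_apply']
        exact hstep (T^[2 * j + 1] x) x (Or.inr ⟨(hmem x hx j).2, hx⟩)
      have t3 : dist (T x) x = c0 := dist_comm _ _
      have t4 : k * dist (T^[2 * j + 1] x) x ≤ k * M :=
        mul_le_mul_of_nonneg_left ih hk0.le
      nlinarith
  -- the key W-WUC premise for orbits
  have hkey : ∀ x ∈ A, ∀ ε > (0:ℝ), ∃ y ∈ B, ∃ n₀ : ℕ, ∀ m ≥ n₀,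
      dist (T^[2 * m] x) y ≤ δ + ε := by
    intro x hx ε hε
    obtain ⟨M, hM0, hMb⟩ := hbound x hx
    obtain ⟨N, hN⟩ : ∃ N : ℕ, k ^ N * M < ε := by
      have h0 : Tendsto (fun n : ℕ => k ^ n * M) atTop (𝓝 (0 * M)) :=
        (tendsto_pow_atTop_nhds_zero_of_lt_one hk0.le hk1).mul_const M
      rw [zero_mul] at h0
      exact (h0.eventually (gt_mem_nhds hε)).exists
    refine ⟨T^[2 * N + 1] x, (hmem x hx N).2, N + 1, ?_⟩
    intro m hm
    obtain ⟨j, rfl⟩ : ∃ j, m = N + 1 + j := ⟨m - (N + 1), by omega⟩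
    have hidx : 2 * (N + 1 + j) = (2 * N + 1) + (2 * j + 1) := by ring
    rw [hidx, Function.iterate_add_apply]
    have hb' := (hmem x hx j).2
    have h1 := hpeel (2 * N + 1) (T^[2 * j + 1] x) x (Or.inr ⟨hb', hx⟩)
    have hdb : dist (T^[2 * j + 1] x) x ≤ M := hMb j
    have hkN : k ^ (2 * N + 1) ≤ k ^ N :=
      pow_le_pow_of_le_one hk0.le hk1.le (by omega)
    have hkN0 : (0:ℝ) ≤ k ^ (2 * N + 1) := pow_nonneg hk0.le _
    have h2 : k ^ (2 * N + 1) * dist (T^[2 * j + 1] x) x ≤ k ^ (2 * N + 1) * M :=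
      mul_le_mul_of_nonneg_left hdb hkN0
    have h3 : k ^ (2 * N + 1) * M ≤ k ^ N * M := mul_le_mul_of_nonneg_right hkN hM0
    have h4 : (0:ℝ) ≤ k ^ (2 * N + 1) * δ := mul_nonneg hkN0 hδ0
    calc dist (T^[2 * N + 1] (T^[2 * j + 1] x)) (T^[2 * N + 1] x)
        ≤ k ^ (2 * N + 1) * dist (T^[2 * j + 1] x) x + (1 - k ^ (2 * N + 1)) * δ := h1
      _ ≤ δ + ε := by nlinarith
  -- obtain the best proximity point from W-WUC
  obtain ⟨a₀, ha₀⟩ := hA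
  obtain ⟨z, φ, hφ, hzt⟩ := hWWUC (fun n => T^[2 * n] a₀)
    (fun n => (hmem a₀ ha₀ n).1) (hkey a₀ ha₀)
  have hzA : z ∈ A := hAcomplete.isClosed.mem_of_tendsto hzt
    (Eventually.of_forall fun n => (hmem a₀ ha₀ (φ n)).1)
  have hbpp : dist z (T z) = δ := by
    refine le_antisymm ?_ (hlow z hzA (T z) (hTA hzA))
    refine le_of_forall_pos_le_add ?_
    intro ε hε
    set c0 := dist a₀ (T a₀) with hc0def
    have hc00 : (0:ℝ) ≤ c0 := dist_nonneg
    obtain ⟨N₁, hN₁⟩ : ∃ N : ℕ, ∀ n ≥ N, dist (T^[2 * φ n] a₀) z < ε / 4 := by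
      have := (Metric.tendsto_atTop.mp hzt) (ε / 4) (by positivity)
      exact this
    obtain ⟨N₂, hN₂⟩ : ∃ N : ℕ, ∀ n ≥ N, k ^ n * c0 < ε / 4 := by
      have h0 : Tendsto (fun n : ℕ => k ^ n * c0) atTop (𝓝 (0 * c0)) :=
        (tendsto_pow_atTop_nhds_zero_of_lt_one hk0.le hk1).mul_const c0
      rw [zero_mul] at h0
      exact eventually_atTop.mp (h0.eventually (gt_mem_nhds (by positivity : (0:ℝ) < ε / 4)))
    set j := max N₁ (max N₂ 1) with hjdef
    set m := φ j with hmdef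
    have hjm : j ≤ m := hφ.le_apply
    have hm1 : 1 ≤ m := le_trans (le_trans (le_max_right N₂ 1) (le_max_right N₁ _)) hjm
    set wj := T^[2 * m] a₀ with hwjdef
    set b' := T^[2 * (m - 1) + 1] a₀ with hb'def
    have hb'B : b' ∈ B := (hmem a₀ ha₀ (m - 1)).2
    have ewj : wj = T b' := by
      rw [hwjdef, hb'def]
      have e : 2 * m = (2 * (m - 1) + 1) + 1 := by omega
      rw [e, Function.iterate_succ_apply']
    have t1 : dist z (T z) ≤ dist z wj + dist wj (T z) := dist_triangle _ _ _
    have t2 : dist wj (T z) ≤ k * dist b' z + (1 - k) * δ := by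
      rw [ewj, dist_comm b' z, dist_comm (T b') (T z)]
      exact hstep z b' (Or.inl ⟨hzA, hb'B⟩)
    have t3 : dist b' z ≤ dist b' wj + dist wj z := dist_triangle _ _ _
    have t4 : dist b' wj ≤ δ + k ^ (2 * (m - 1) + 1) * c0 := by
      have e : 2 * m = (2 * (m - 1) + 1) + 1 := by omega
      rw [hb'def, hwjdef, e]
      exact hc a₀ ha₀ (2 * (m - 1) + 1)
    have t5 : k ^ (2 * (m - 1) + 1) ≤ k ^ j :=
      pow_le_pow_of_le_one hk0.le hk1.le (by omega)
    have t6 : k ^ j * c0 < ε / 4 := hN₂ j (le_trans (le_max_left N₂ 1) (le_max_right N₁ _))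
    have t7 : dist wj z < ε / 4 := hN₁ j (le_max_left _ _)
    have t8 : dist z wj = dist wj z := dist_comm _ _
    have t9 : k ^ (2 * (m - 1) + 1) * c0 ≤ k ^ j * c0 :=
      mul_le_mul_of_nonneg_right t5 hc00
    have t10 : k * dist b' z ≤ k * (dist b' wj + dist wj z) :=
      mul_le_mul_of_nonneg_left t3 hk0.le
    have t11 : k * dist wj z ≤ dist wj z := by
      nlinarith [dist_nonneg (x := wj) (y := z)]
    have t12 : k * dist b' wj ≤ dist b' wj := by
      nlinarith [dist_nonneg (x := b') (y := wj)]
    nlinarith [dist_nonneg (x := b') (y := wj)]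
  -- infDist characterization for best proximity points
  have hfixaux : ∀ w ∈ A, dist w (T w) = δ → infDist (T w) A = δ := by
    intro w hw hwδ
    refine le_antisymm ?_ ?_
    · calc infDist (T w) A ≤ dist (T w) w := infDist_le_dist_of_mem hw
        _ = δ := by rw [dist_comm]; exact hwδ
    · by_contra h
      push_neg at h
      obtain ⟨y, hy, hlt⟩ := (infDist_lt_iff ⟨w, hw⟩).mp h
      have := hlow y hy (T w) (hTA hw)
      rw [dist_comm] at hlt
      linarith
  -- best proximity points are fixed by T²
  have hfix : ∀ w ∈ A, dist w (T w) = δ → T (T w) = w := by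
    intro w hw hwδ
    obtain ⟨y, _, hu⟩ := hcheb (T w) (hTA hw)
    have hinf := hfixaux w hw hwδ
    have h1 : w ∈ A ∧ dist (T w) w = infDist (T w) A := by
      refine ⟨hw, ?_⟩
      rw [dist_comm, hwδ, hinf]
    have hTTw : T (T w) ∈ A := hTB (hTA hw)
    have h2 : T (T w) ∈ A ∧ dist (T w) (T (T w)) = infDist (T w) A := by
      refine ⟨hTTw, ?_⟩
      rw [hinf]
      refine le_antisymm ?_ ?_
      · have := hstep w (T w) (Or.inl ⟨hw, hTA hw⟩)
        rw [hwδ] at this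
        linarith
      · rw [dist_comm]
        exact hlow _ hTTw _ (hTA hw)
    exact (hu _ h2).trans (hu _ h1).symm
  have hz2 : T (T z) = z := hfix z hzA hbpp
  -- uniqueness
  have huniqz : ∀ z' ∈ A, dist z' (T z') = δ → z' = z := by
    intro z' hz' hz'δ
    have hz'2 := hfix z' hz' hz'δ
    have hα : δ ≤ dist z (T z') := hlow z hzA (T z') (hTA hz')
    have hβ : δ ≤ dist z' (T z) := hlow z' hz' (T z) (hTA hzA)
    have h1 : dist z' (T z) ≤ k * dist z (T z') + (1 - k) * δ := by
      have h := hstep (T z') z (Or.inr ⟨hTA hz', hzA⟩)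
      rw [hz'2, dist_comm (T z') z] at h
      exact h
    have h2 : dist z (T z') ≤ k * dist z' (T z) + (1 - k) * δ := by
      have h := hstep (T z) z' (Or.inr ⟨hTA hzA, hz'⟩)
      rw [hz2, dist_comm (T z) z'] at h
      exact h
    have hαδ : dist z (T z') = δ := by nlinarith
    obtain ⟨y, _, hu⟩ := hcheb (T z') (hTA hz')
    have hinf := hfixaux z' hz' hz'δ
    have hp1 : z' ∈ A ∧ dist (T z') z' = infDist (T z') A := by
      refine ⟨hz', ?_⟩
      rw [dist_comm, hz'δ, hinf]
    have hp2 : z ∈ A ∧ dist (T z') z = infDist (T z') A := by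
      refine ⟨hzA, ?_⟩
      rw [dist_comm, hαδ, hinf]
    exact (hu _ hp1).trans (hu _ hp2).symm
  -- convergence
  have hconv : ∀ x ∈ A, Tendsto (fun n => T^[2 * n] x) atTop (𝓝 z) := by
    intro x hx
    set b : ℕ → ℝ := fun n => dist (T^[2 * n] x) (T z) with hbdef
    have hk20 : (0:ℝ) ≤ k ^ 2 := by positivity
    have hk21 : k ^ 2 < 1 := by nlinarith
    have hbrec : ∀ n, b (n + 1) ≤ k ^ 2 * b n + (1 - k ^ 2) * δ := by
      intro n
      have e1 : 2 * (n + 1) = (2 * n + 1) + 1 := by ring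
      have h2 : dist (T^[2 * n + 1] x) z ≤ k * b n + (1 - k) * δ := by
        have h := hstep (T^[2 * n] x) (T z) (Or.inl ⟨(hmem x hx n).1, hTA hzA⟩)
        rw [hz2] at h
        rw [Function.iterate_succ_apply']
        exact h
      have h1 : dist (T^[2 * (n + 1)] x) (T z) ≤ k * dist (T^[2 * n + 1] x) z + (1 - k) * δ := by
        rw [e1, Function.iterate_succ_apply']
        exact hstep (T^[2 * n + 1] x) z (Or.inr ⟨(hmem x hx n).2, hzA⟩)
      have h3 : k * dist (T^[2 * n + 1] x) z ≤ k * (k * b n + (1 - k) * δ) :=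
        mul_le_mul_of_nonneg_left h2 hk0.le
      show dist (T^[2 * (n + 1)] x) (T z) ≤ k ^ 2 * b n + (1 - k ^ 2) * δ
      nlinarith
    have hblow : ∀ n, δ ≤ b n := fun n => hlow _ (hmem x hx n).1 _ (hTA hzA)
    have hbub : ∀ n, b n ≤ δ + (k ^ 2) ^ n * (b 0 - δ) := by
      intro n
      induction n with
      | zero => simp
      | succ n ih =>
        have h1 := hbrec n
        have h2 : k ^ 2 * b n ≤ k ^ 2 * (δ + (k ^ 2) ^ n * (b 0 - δ)) :=
          mul_le_mul_of_nonneg_left ih hk20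
        have h3 : (k ^ 2) ^ (n + 1) * (b 0 - δ) = k ^ 2 * ((k ^ 2) ^ n * (b 0 - δ)) := by ring
        nlinarith
    have hbtend : Tendsto b atTop (𝓝 δ) := by
      have h0 : Tendsto (fun n : ℕ => δ + (k ^ 2) ^ n * (b 0 - δ)) atTop
          (𝓝 (δ + 0 * (b 0 - δ))) :=
        tendsto_const_nhds.add
          (((tendsto_pow_atTop_nhds_zero_of_lt_one hk20 hk21)).mul_const _)
      rw [zero_mul, add_zero] at h0
      exact tendsto_of_tendsto_of_tendsto_of_le_of_le tendsto_const_nhds h0 hblow hbub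
    apply tendsto_of_subseq_tendsto
    intro ns hns
    have hsub : ∀ ε > (0:ℝ), ∃ y ∈ B, ∃ n₀ : ℕ, ∀ n ≥ n₀,
        dist (T^[2 * ns n] x) y ≤ δ + ε := by
      intro ε hε
      refine ⟨T z, hTA hzA, ?_⟩
      obtain ⟨N, hN⟩ : ∃ N : ℕ, (k ^ 2) ^ N * (b 0 - δ) < ε := by
        have h0 : Tendsto (fun n : ℕ => (k ^ 2) ^ n * (b 0 - δ)) atTop (𝓝 (0 * (b 0 - δ))) :=
          (tendsto_pow_atTop_nhds_zero_of_lt_one hk20 hk21).mul_const _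
        rw [zero_mul] at h0
        exact (h0.eventually (gt_mem_nhds hε)).exists
      obtain ⟨n₀, hn₀⟩ := eventually_atTop.mp (hns.eventually (eventually_ge_atTop N))
      refine ⟨n₀, fun n hn => ?_⟩
      have h1 := hbub (ns n)
      have hmono : (k ^ 2) ^ (ns n) ≤ (k ^ 2) ^ N :=
        pow_le_pow_of_le_one hk20 hk21.le (hn₀ n hn)
      have hb0 : δ ≤ b 0 := hblow 0
      have h2 : (k ^ 2) ^ (ns n) * (b 0 - δ) ≤ (k ^ 2) ^ N * (b 0 - δ) :=
        mul_le_mul_of_nonneg_right hmono (by linarith)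
      show dist (T^[2 * ns n] x) (T z) ≤ δ + ε
      calc dist (T^[2 * ns n] x) (T z) = b (ns n) := rfl
        _ ≤ δ + (k ^ 2) ^ (ns n) * (b 0 - δ) := h1
        _ ≤ δ + ε := by linarith
    obtain ⟨w, ψ, hψ, hwt⟩ := hWWUC (fun n => T^[2 * ns n] x)
      (fun n => (hmem x hx (ns n)).1) hsub
    have hwA : w ∈ A := hAcomplete.isClosed.mem_of_tendsto hwt
      (Eventually.of_forall fun n => (hmem x hx (ns (ψ n))).1)
    have hwd : dist w (T z) = δ := by
      have h1 : Tendsto (fun i => dist (T^[2 * ns (ψ i)] x) (T z)) atTop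
          (𝓝 (dist w (T z))) := hwt.dist tendsto_const_nhds
      have h2 : Tendsto (fun i => b (ns (ψ i))) atTop (𝓝 δ) :=
        hbtend.comp (hns.comp hψ.tendsto_atTop)
      exact tendsto_nhds_unique h1 h2
    have hinf := hfixaux z hzA hbpp
    obtain ⟨y, _, hu⟩ := hcheb (T z) (hTA hzA)
    have hp1 : w ∈ A ∧ dist (T z) w = infDist (T z) A := by
      refine ⟨hwA, ?_⟩
      rw [dist_comm, hwd, hinf]
    have hp2 : z ∈ A ∧ dist (T z) z = infDist (T z) A := by
      refine ⟨hzA, ?_⟩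
      rw [dist_comm, hbpp, hinf]
    have hwz : w = z := (hu _ hp1).trans (hu _ hp2).symm
    refine ⟨ψ, ?_⟩
    rw [← hwz]
    exact hwt
  exact ⟨z, hzA, hbpp, huniqz, hconv⟩
end

section
/- Let A and B = A + h be proximinal parallel subsets of a Banach space X with ‖h‖ = dist(A,B) = d, and let C = A + 2h, so that A, B, C are pairwise proximinal parallel sets. Then the function d₁(x,y) = inf{r > 0 : ‖y−(x−h)‖ ≤ d+r and ‖y−(x+h)‖ ≤ d+r} defines a semimetric on B (i.e., d₁(x,y) = 0 if and only if x = y, and d₁(x,y) = d₁(y,x) for all x,y ∈ B), it satisfies d₁(x,y) ≤ ‖x−y‖ for every x,y ∈ B, and consequently B ∩ B̄(x,r) ⊆ B₁(x,r) for every x ∈ B and r ≥ 0, where B̄(x,r) is the closed norm ball and B₁(x,r) = {y ∈ B : d₁(x,y) ≤ r}. -/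
open Filter Metric

/-- `(A,B)` is a sharp proximinal pair. -/
def SharpProximinalPair {X : Type*} [NormedAddCommGroup X] (A B : Set X) : Prop :=
  ∀ x ∈ A, ∀ y ∈ B, ∃! p : X × X,
    p.1 ∈ A ∧ p.2 ∈ B ∧ dist x p.2 = setDist A B ∧ dist p.1 y = setDist A B

/-- `A` and `B` are proximinal parallel sets, with `B = A + h` and `‖h‖ = dist(A,B)`. -/
def ProximinalParallel {X : Type*} [NormedAddCommGroup X] (A B : Set X) (h : X) : Prop :=
  SharpProximinalPair A B ∧ B = (fun a => a + h) '' A ∧ ‖h‖ = setDist A B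

/-- The semimetric `d₁(x,y) = inf {r > 0 : ‖y - (x - h)‖ ≤ d + r and ‖y - (x + h)‖ ≤ d + r}`. -/
noncomputable def semiD1 {X : Type*} [NormedAddCommGroup X] (h : X) (d : ℝ) (x y : X) : ℝ :=
  sInf {r : ℝ | 0 < r ∧ ‖y - (x - h)‖ ≤ d + r ∧ ‖y - (x + h)‖ ≤ d + r}

private lemma nswap {X : Type*} [NormedAddCommGroup X] (u v w : X) :
    ‖u - (v - w)‖ = ‖v - (u + w)‖ := by
  rw [← norm_neg (v - (u + w))]; congr 1; abel

private lemma semiD1_le_norm {X : Type*} [NormedAddCommGroup X] (h : X) (d : ℝ)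
    (hdnn : 0 ≤ d) (hdh : d = ‖h‖) (x y : X) : semiD1 h d x y ≤ ‖x - y‖ := by
  apply le_of_forall_pos_le_add
  intro ε hε
  apply csInf_le ⟨0, fun r hr => le_of_lt hr.1⟩
  have hx1 : y - (x - h) = (y - x) + h := by abel
  have hx2 : y - (x + h) = (y - x) + (-h) := by abel
  have hn : ‖y - x‖ = ‖x - y‖ := norm_sub_rev _ _
  refine ⟨by positivity, ?_, ?_⟩
  · rw [hx1]
    have := norm_add_le (y - x) h
    rw [hn, ← hdh] at this
    linarith
  · rw [hx2]
    have := norm_add_le (y - x) (-h)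
    rw [hn, norm_neg, ← hdh] at this
    linarith

theorem semiD1_is_semimetric {X : Type*} [NormedAddCommGroup X]
    [NormedSpace ℝ X] [CompleteSpace X]
    (A B : Set X) (hA : A.Nonempty) (hB : B.Nonempty) (h : X)
    (hpar : ProximinalParallel A B h) (C : Set X) (hC : C = (fun a => a + h + h) '' A)
    (d : ℝ) (hd : d = setDist A B) :
    (∀ x ∈ B, ∀ y ∈ B, (semiD1 h d x y = 0 ↔ x = y)) ∧
    (∀ x ∈ B, ∀ y ∈ B, semiD1 h d x y = semiD1 h d y x) ∧
    (∀ x ∈ B, ∀ y ∈ B, semiD1 h d x y ≤ ‖x - y‖) ∧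
    (∀ x ∈ B, ∀ r : ℝ, 0 ≤ r →
      B ∩ Metric.closedBall x r ⊆ {y ∈ B | semiD1 h d x y ≤ r}) := by
  obtain ⟨hsharp, hBA, hnh⟩ := hpar
  have hdh : d = ‖h‖ := by rw [hd, ← hnh]
  have hdnn : 0 ≤ d := hdh ▸ norm_nonneg h
  -- lower bound on setDist at elements
  have hlow : ∀ a ∈ A, ∀ b ∈ B, d ≤ dist a b := by
    intro a ha b hb
    rw [hd]
    exact csInf_le ⟨0, by rintro _ ⟨u, hu, v, hv, rfl⟩; exact dist_nonneg⟩
      (Set.mem_image2_of_mem ha hb)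
  have hle := semiD1_le_norm h d hdnn hdh
  -- nonemptiness of the defining set
  have hne : ∀ x y : X,
      ({r : ℝ | 0 < r ∧ ‖y - (x - h)‖ ≤ d + r ∧ ‖y - (x + h)‖ ≤ d + r}).Nonempty := by
    intro x y
    refine ⟨‖y - (x - h)‖ + ‖y - (x + h)‖ + 1, by positivity, by
      have := norm_nonneg (y - (x + h)); linarith, by
      have := norm_nonneg (y - (x - h)); linarith⟩
  refine ⟨?_, ?_, fun x _ y _ => hle x y, ?_⟩
  · -- zero iff equal
    intro x hx y hy
    constructor
    · intro h0
      -- bounds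
      have key : ∀ c : ℝ, (∀ r ∈ {r : ℝ | 0 < r ∧ ‖y - (x - h)‖ ≤ d + r ∧
          ‖y - (x + h)‖ ≤ d + r}, c - d ≤ r) → c ≤ d := by
        intro c hc
        by_contra hcd
        push_neg at hcd
        have : c - d ≤ semiD1 h d x y := le_csInf (hne x y) (hc)
        rw [h0] at this
        linarith
      have b1 : ‖y - (x - h)‖ ≤ d := key _ (fun r hr => by linarith [hr.2.1])
      have b2 : ‖y - (x + h)‖ ≤ d := key _ (fun r hr => by linarith [hr.2.2])
      -- x = a + h, y = b + h
      obtain ⟨a, haA, rfl⟩ := hBA ▸ hx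
      obtain ⟨b, hbA, rfl⟩ := hBA ▸ hy
      have e1 : dist a (b + h) = d := by
        have : dist a (b + h) = ‖(b + h) - ((a + h) - h)‖ := by
          rw [dist_eq_norm, ← norm_neg]; congr 1; abel
        have hge := hlow a haA (b + h) (hBA ▸ ⟨b, hbA, rfl⟩)
        rw [this] at hge ⊢
        exact le_antisymm (this ▸ b1) hge
      have e2 : dist b (a + h) = d := by
        have heq : dist b (a + h) = ‖(b + h) - ((a + h) + h)‖ := by
          rw [dist_eq_norm]; congr 1; abel
        have hge := hlow b hbA (a + h) (hBA ▸ ⟨a, haA, rfl⟩)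
        rw [heq] at hge ⊢
        exact le_antisymm (heq ▸ b2) hge
      have edist : ∀ c : X, dist c (c + h) = setDist A B := by
        intro c
        rw [← hnh, dist_eq_norm, ← norm_neg]; congr 1; abel
      obtain ⟨p, _, huniq⟩ := hsharp a haA (a + h) (hBA ▸ ⟨a, haA, rfl⟩)
      have h1 : (a, a + h) = p := huniq (a, a + h) ⟨haA, hBA ▸ ⟨a, haA, rfl⟩,
        edist a, edist a⟩
      have h2 : (b, b + h) = p := huniq (b, b + h) ⟨hbA, hBA ▸ ⟨b, hbA, rfl⟩,
        hd ▸ e1, hd ▸ e2⟩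
      have : (a, a + h) = ((b : X), b + h) := h1.trans h2.symm
      show a + h = b + h
      exact congrArg Prod.snd this
    · rintro rfl
      have hset : {r : ℝ | 0 < r ∧ ‖x - (x - h)‖ ≤ d + r ∧ ‖x - (x + h)‖ ≤ d + r}
          = Set.Ioi (0 : ℝ) := by
        ext r
        simp only [Set.mem_setOf_eq, Set.mem_Ioi]
        constructor
        · exact fun hr => hr.1
        · intro hr
          refine ⟨hr, ?_, ?_⟩
          · have : x - (x - h) = h := by abel
            rw [this, ← hdh]; linarith
          · have : x - (x + h) = -h := by abel
            rw [this, norm_neg, ← hdh]; linarith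
      rw [semiD1, hset]
      exact csInf_Ioi
  · -- symmetry
    intro x _ y _
    unfold semiD1
    congr 1
    ext r
    simp only [Set.mem_setOf_eq]
    rw [nswap x y h, nswap y x h]
    tauto
  · -- ball inclusion
    intro x _ r _ y ⟨hyB, hyb⟩
    refine ⟨hyB, le_trans (hle x y) ?_⟩
    rw [← dist_eq_norm, dist_comm]
    exact mem_closedBall.mp hyb
end

section
/- Let X be a reflexive and strictly convex Banach space with property (H). Let A and B = A + h be proximinal parallel subsets of X with ‖h‖ = dist(A,B) = d and C = A + 2h, and suppose B is nonempty, closed and convex. Then, for each x ∈ B, there exists a function f : (0,∞) → (0,∞) with lim_{r→0} f(r) = 0 such that B₁(x,r) ⊆ B̄(x,f(r)) for all r > 0, where B₁(x,r) = {y ∈ B : d₁(x,y) ≤ r} with d₁(x,y) = inf{ρ > 0 : ‖y−(x−h)‖ ≤ d+ρ and ‖y−(x+h)‖ ≤ d+ρ}, and B̄(x,s) is the closed norm ball of center x and radius s. -/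
open Filter Metric

/-- The sequence `x` converges weakly to `z`. -/
def WeakTendsto {X : Type*} [NormedAddCommGroup X] [NormedSpace ℝ X]
    (x : ℕ → X) (z : X) : Prop :=
  ∀ f : X →L[ℝ] ℝ, Tendsto (fun n => f (x n)) atTop (nhds (f z))

/-- `X` is reflexive: the canonical embedding into the double dual is surjective. -/
def ReflexiveSpace (X : Type*) [NormedAddCommGroup X] [NormedSpace ℝ X] : Prop :=
  Function.Surjective (NormedSpace.inclusionInDoubleDual ℝ X)

/-- Property (H): for sequences on the unit sphere, weak and norm convergence coincide. -/
def PropertyH (X : Type*) [NormedAddCommGroup X] [NormedSpace ℝ X] : Prop :=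
  ∀ (x : ℕ → X) (z : X), (∀ n, ‖x n‖ = 1) →
    (WeakTendsto x z ↔ Tendsto x atTop (nhds z))

/-!
Every `y ∈ B` with `d₁(x, y) ≤ r` lies in the lens `B̄(x - h, d + r) ∩ B̄(x + h, d + r)`, and
`d = ‖h‖`, so it suffices that these lenses shrink to `x` as `r → 0`. Take `yₙ` in lenses of
radii tending to `0`. They are bounded, so by Banach–Alaoglu in the bidual and reflexivity every
weak cluster point `z` lies in `B̄(x - h, ‖h‖) ∩ B̄(x + h, ‖h‖)`, which is `{x}` by strict
convexity; hence `yₙ ⇀ x`. Then `yₙ - (x - h) ⇀ h` with norms tending to `‖h‖`, and property (H)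
turns this into norm convergence.
-/

open Topology NormedSpace

section WeakCompactness

variable {X : Type*} [NormedAddCommGroup X] [NormedSpace ℝ X]

variable (X) in
noncomputable def toWeakBidual (z : X) : WeakDual ℝ (StrongDual ℝ X) :=
  StrongDual.toWeakDual (inclusionInDoubleDual ℝ X z)

theorem toWeakBidual_mem_closedBall_iff {z a : X} {r : ℝ} :
    WeakDual.toStrongDual (toWeakBidual X z) ∈ closedBall (inclusionInDoubleDual ℝ X a) r ↔
      z ∈ closedBall a r := by
  simp only [mem_closedBall]
  exact iff_of_eq (congrArg (· ≤ r) ((inclusionInDoubleDualLi ℝ).isometry.dist_eq z a))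

/-- Weak lower semicontinuity of the norm, from the weak-star closedness of balls in the bidual. -/
theorem mem_closedBall_of_mapClusterPt {ι : Type*} {l : Filter ι} {y : ι → X} {z a : X}
    {r : ℝ} (hz : MapClusterPt (toWeakBidual X z) l (toWeakBidual X ∘ y))
    (hy : ∀ᶠ i in l, y i ∈ closedBall a r) : z ∈ closedBall a r :=
  toWeakBidual_mem_closedBall_iff.mp <|
    (WeakDual.isClosed_closedBall _ r).mem_of_mapClusterPt hz <|
      hy.mono fun _ hi => toWeakBidual_mem_closedBall_iff.mpr hi

/-- Banach–Alaoglu in the bidual; reflexivity puts every weak-star cluster point back in `X`. -/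
theorem ReflexiveSpace.tendsto_apply_of_unique_mapClusterPt (hrefl : ReflexiveSpace X)
    {ι : Type*} {l : Filter ι} {y : ι → X} {x : X} {M : ℝ} (hM : ∀ᶠ i in l, ‖y i‖ ≤ M)
    (huniq : ∀ z, MapClusterPt (toWeakBidual X z) l (toWeakBidual X ∘ y) → z = x)
    (f : StrongDual ℝ X) : Tendsto (fun i => f (y i)) l (𝓝 (f x)) := by
  have hK := WeakDual.isCompact_closedBall (𝕜 := ℝ) (inclusionInDoubleDual ℝ X 0) M
  have hlim : Tendsto (toWeakBidual X ∘ y) l (𝓝 (toWeakBidual X x)) := by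
    refine hK.tendsto_nhds_of_unique_mapClusterPt ?_ fun φ _ hφ => ?_
    · filter_upwards [hM] with i hi
      exact toWeakBidual_mem_closedBall_iff.mpr (mem_closedBall_zero_iff.mpr hi)
    · obtain ⟨z, rfl⟩ := hrefl (WeakDual.toStrongDual φ)
      rw [huniq z hφ]
      rfl
  exact ((WeakDual.eval_continuous f).tendsto _).comp hlim

end WeakCompactness

theorem PropertyH.tendsto_of_weakTendsto {X : Type*} [NormedAddCommGroup X] [NormedSpace ℝ X]
    (hH : PropertyH X) {u : ℕ → X} {z : X} (hweak : WeakTendsto u z)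
    (hnorm : Tendsto (fun n => ‖u n‖) atTop (𝓝 ‖z‖)) : Tendsto u atTop (𝓝 z) := by
  rcases eq_or_ne z 0 with rfl | hz
  · exact tendsto_zero_iff_norm_tendsto_zero.mpr (by simpa using hnorm)
  have hz' : 0 < ‖z‖ := norm_pos_iff.mpr hz
  obtain ⟨N, hN⟩ := eventually_atTop.mp (hnorm.eventually (lt_mem_nhds hz'))
  set v : ℕ → X := fun n => ‖u (n + N)‖⁻¹ • u (n + N)
  have hv : ∀ n, ‖v n‖ = 1 := fun n => by
    simp only [v, norm_smul, norm_inv, norm_norm]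
    exact inv_mul_cancel₀ (hN _ (Nat.le_add_left N n)).ne'
  have hnormN : Tendsto (fun n => ‖u (n + N)‖) atTop (𝓝 ‖z‖) :=
    (tendsto_add_atTop_iff_nat N).mpr hnorm
  have hvweak : WeakTendsto v (‖z‖⁻¹ • z) := fun f => by
    simpa [v] using (hnormN.inv₀ hz'.ne').mul ((tendsto_add_atTop_iff_nat N).mpr (hweak f))
  have hvlim := (hH v _ hv).mp hvweak
  have hu : (fun n => u (n + N)) = fun n => ‖u (n + N)‖ • v n := funext fun n =>
    (smul_inv_smul₀ (hN _ (Nat.le_add_left N n)).ne' _).symm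
  rw [← tendsto_add_atTop_iff_nat N, hu]
  simpa [smul_inv_smul₀ hz'.ne'] using hnormN.smul hvlim

section Lens

variable {X : Type*} [NormedAddCommGroup X]

def lens (x h : X) (δ : ℝ) : Set X :=
  closedBall (x - h) (‖h‖ + δ) ∩ closedBall (x + h) (‖h‖ + δ)

theorem lens_mono {x h : X} {δ δ' : ℝ} (hδ : δ ≤ δ') : lens x h δ ⊆ lens x h δ' :=
  Set.inter_subset_inter (closedBall_subset_closedBall (by linarith))
    (closedBall_subset_closedBall (by linarith))

variable [NormedSpace ℝ X]

theorem dist_sub_add_self (x h : X) : dist (x - h) (x + h) = 2 * ‖h‖ := by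
  rw [dist_eq_norm, show x - h - (x + h) = -((2 : ℝ) • h) by rw [two_smul]; abel, norm_neg,
    norm_smul, Real.norm_two]

theorem eq_of_mem_lens_zero [StrictConvexSpace ℝ X] {x h z : X} (hz : z ∈ lens x h 0) :
    z = x := by
  obtain ⟨h₁, h₂⟩ := hz
  rw [mem_closedBall, add_zero] at h₁ h₂
  have htri := dist_triangle (x - h) z (x + h)
  rw [dist_sub_add_self, dist_comm] at htri
  rw [← midpoint_sub_add (R := ℝ) x h]
  apply eq_midpoint_of_dist_eq_half <;> rw [dist_sub_add_self] <;> linarith [dist_comm z (x - h)]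

theorem weakTendsto_of_mem_lens [StrictConvexSpace ℝ X] (hrefl : ReflexiveSpace X)
    {x h : X} {y : ℕ → X} {e : ℕ → ℝ} (he : Tendsto e atTop (𝓝 0))
    (hy : ∀ n, y n ∈ lens x h (e n)) : WeakTendsto y x := by
  refine hrefl.tendsto_apply_of_unique_mapClusterPt (M := ‖x - h‖ + ‖h‖ + 1) ?_ fun z hz => ?_
  · filter_upwards [he.eventually_le_const one_pos] with n hn
    have := mem_closedBall_iff_norm.mp (hy n).1
    linarith [norm_le_norm_add_norm_sub' (y n) (x - h)]
  have hlim : ∀ η > 0, z ∈ lens x h η := fun η hη => by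
    have hev : ∀ᶠ n in atTop, y n ∈ lens x h η :=
      (he.eventually_le_const hη).mono fun n hn => lens_mono hn (hy n)
    exact ⟨mem_closedBall_of_mapClusterPt hz (hev.mono fun _ hn => hn.1),
      mem_closedBall_of_mapClusterPt hz (hev.mono fun _ hn => hn.2)⟩
  refine eq_of_mem_lens_zero (h := h) ⟨?_, ?_⟩ <;> rw [mem_closedBall, add_zero] <;>
    refine le_of_forall_pos_le_add fun η hη => ?_
  exacts [(hlim η hη).1, (hlim η hη).2]

/-- `‖y - (x - h)‖ → ‖h‖` by the triangle inequality through `y`, so property (H) upgrades the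
weak convergence `y - (x - h) ⇀ h` to norm convergence. -/
theorem tendsto_of_mem_lens [StrictConvexSpace ℝ X] (hrefl : ReflexiveSpace X)
    (hH : PropertyH X) {x h : X} {y : ℕ → X} {e : ℕ → ℝ} (he : Tendsto e atTop (𝓝 0))
    (hy : ∀ n, y n ∈ lens x h (e n)) : Tendsto y atTop (𝓝 x) := by
  have hweak : WeakTendsto (fun n => y n - (x - h)) h := fun f => by
    simpa [map_sub] using (weakTendsto_of_mem_lens hrefl he hy f).sub_const (f (x - h))
  have hnorm : Tendsto (fun n => ‖y n - (x - h)‖) atTop (𝓝 ‖h‖) := by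
    refine tendsto_of_tendsto_of_tendsto_of_le_of_le (g := fun n => ‖h‖ - e n)
      (h := fun n => ‖h‖ + e n) (by simpa using he.const_sub ‖h‖)
      (by simpa using he.const_add ‖h‖) (fun n => ?_) fun n => ?_
    · have htri := dist_triangle (x - h) (y n) (x + h)
      rw [dist_sub_add_self, dist_comm] at htri
      linarith [mem_closedBall.mp (hy n).1, mem_closedBall.mp (hy n).2, dist_eq_norm (y n) (x - h)]
    · exact mem_closedBall_iff_norm.mp (hy n).1
  simpa using (hH.tendsto_of_weakTendsto hweak hnorm).add_const (x - h)

theorem eventually_lens_subset_closedBall [StrictConvexSpace ℝ X] (hrefl : ReflexiveSpace X)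
    (hH : PropertyH X) (x h : X) {ε : ℝ} (hε : 0 < ε) :
    ∀ᶠ δ in 𝓝[>] 0, lens x h δ ⊆ closedBall x ε := by
  by_contra hfreq
  rw [not_eventually, frequently_iff_seq_forall] at hfreq
  obtain ⟨δ, hδ, hbad⟩ := hfreq
  simp only [Set.not_subset] at hbad
  choose y hy hyε using hbad
  have hlim := tendsto_of_mem_lens hrefl hH (tendsto_nhds_of_tendsto_nhdsWithin hδ) hy
  obtain ⟨n, hn⟩ := (hlim.eventually (closedBall_mem_nhds x hε)).exists
  exact hyε n hn

end Lens

theorem mem_closedBall_inter_of_semiD1_le {X : Type*} [NormedAddCommGroup X] {h x y : X}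
    {d r : ℝ} (hr : semiD1 h d x y ≤ r) :
    y ∈ closedBall (x - h) (d + r) ∩ closedBall (x + h) (d + r) := by
  simp only [Set.mem_inter_iff, mem_closedBall_iff_norm, ← sub_le_iff_le_add']
  set m := max (‖y - (x - h)‖ - d) (‖y - (x + h)‖ - d)
  have hne : {ρ : ℝ | 0 < ρ ∧ ‖y - (x - h)‖ ≤ d + ρ ∧ ‖y - (x + h)‖ ≤ d + ρ}.Nonempty :=
    ⟨max 1 m, lt_max_of_lt_left one_pos,
      sub_le_iff_le_add'.mp (le_max_of_le_right (le_max_left _ _)),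
      sub_le_iff_le_add'.mp (le_max_of_le_right (le_max_right _ _))⟩
  have hm : m ≤ semiD1 h d x y := le_csInf hne fun ρ hρ =>
    max_le (sub_le_iff_le_add'.mpr hρ.2.1) (sub_le_iff_le_add'.mpr hρ.2.2)
  exact max_le_iff.mp (hm.trans hr)

theorem exists_radius_subset_closedBall {X : Type*} [PseudoMetricSpace X] {S : ℝ → Set X}
    {x : X} (hbdd : ∀ r > 0, Bornology.IsBounded (S r))
    (hsmall : ∀ ε > 0, ∀ᶠ r in 𝓝[>] 0, S r ⊆ closedBall x ε) :
    ∃ f : ℝ → ℝ, (∀ r > (0 : ℝ), 0 < f r) ∧ Tendsto f (𝓝[>] 0) (𝓝 0) ∧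
      ∀ r > (0 : ℝ), S r ⊆ closedBall x (f r) := by
  set g : ℝ → ℝ := fun r => sSup ((dist · x) '' S r)
  have hg0 : ∀ r, 0 ≤ g r := fun r => Real.sSup_nonneg <| by
    rintro _ ⟨y, -, rfl⟩
    exact dist_nonneg
  have hg : Tendsto g (𝓝[>] 0) (𝓝 0) := by
    refine Metric.tendsto_nhds.mpr fun ε hε => ?_
    filter_upwards [hsmall (ε / 2) (half_pos hε)] with r hr
    rw [Real.dist_0_eq_abs, abs_of_nonneg (hg0 r)]
    refine (Real.sSup_le ?_ (half_pos hε).le).trans_lt (half_lt_self hε)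
    rintro _ ⟨y, hy, rfl⟩
    exact hr hy
  refine ⟨fun r => r + g r, fun r hr => by positivity [hg0 r], ?_, fun r hr y hy => ?_⟩
  · simpa using (tendsto_nhdsWithin_of_tendsto_nhds tendsto_id).add hg
  · obtain ⟨R, hR⟩ := (hbdd r hr).subset_closedBall x
    have hle : dist y x ≤ g r :=
      le_csSup ⟨R, by rintro _ ⟨z, hz, rfl⟩; exact hR hz⟩ ⟨y, hy, rfl⟩
    exact mem_closedBall.mpr (by linarith)

theorem d1_balls_inside_norm_balls_general {X : Type*} [NormedAddCommGroup X]
    [NormedSpace ℝ X] [StrictConvexSpace ℝ X]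
    (hrefl : ReflexiveSpace X) (hH : PropertyH X)
    (A B : Set X) (h : X) (hpar : ProximinalParallel A B h)
    (d : ℝ) (hd : d = setDist A B) :
    ∀ x ∈ B, ∃ f : ℝ → ℝ, (∀ r > (0 : ℝ), 0 < f r) ∧
      Tendsto f (nhdsWithin 0 (Set.Ioi 0)) (nhds 0) ∧
      ∀ r > (0 : ℝ), {y ∈ B | semiD1 h d x y ≤ r} ⊆ Metric.closedBall x (f r) := by
  intro x _
  obtain rfl : d = ‖h‖ := hd.trans hpar.2.2.symm
  have hlens : ∀ r, {y ∈ B | semiD1 h ‖h‖ x y ≤ r} ⊆ lens x h r :=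
    fun r y hy => mem_closedBall_inter_of_semiD1_le hy.2
  refine exists_radius_subset_closedBall (fun r _ => ?_) fun ε hε => ?_
  · exact isBounded_closedBall.subset fun y hy => (hlens r hy).1
  · filter_upwards [eventually_lens_subset_closedBall hrefl hH x h hε] with r hr
    exact (hlens r).trans hr

theorem d1_balls_inside_norm_balls {X : Type*} [NormedAddCommGroup X]
    [NormedSpace ℝ X] [CompleteSpace X] [StrictConvexSpace ℝ X]
    (hrefl : ReflexiveSpace X) (hH : PropertyH X)
    (A B : Set X) (h : X) (hpar : ProximinalParallel A B h)
    (C : Set X) (hC : C = (fun a => a + h + h) '' A)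
    (hBne : B.Nonempty) (hBclosed : IsClosed B) (hBconv : Convex ℝ B)
    (d : ℝ) (hd : d = setDist A B) :
    ∀ x ∈ B, ∃ f : ℝ → ℝ, (∀ r > (0 : ℝ), 0 < f r) ∧
      Tendsto f (nhdsWithin 0 (Set.Ioi 0)) (nhds 0) ∧
      ∀ r > (0 : ℝ), {y ∈ B | semiD1 h d x y ≤ r} ⊆ Metric.closedBall x (f r) :=
  d1_balls_inside_norm_balls_general hrefl hH A B h hpar d hd
end

section
/- Let X be a reflexive and strictly convex Banach space with property (H). Let A and B = A + h be proximinal parallel subsets of X with ‖h‖ = dist(A,B) = d and C = A + 2h, and suppose B is nonempty, closed and convex. Then the metric induced by the norm on B and the semimetric d₁(x,y) = inf{r > 0 : ‖y−(x−h)‖ ≤ d+r and ‖y−(x+h)‖ ≤ d+r} are compatible on B. -/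
open Filter Metric

/-!
Since `d = ‖h‖`, one always has `d₁(x, y) ≤ ‖y - x‖`, while `d₁(x, y) ≤ g` puts `y - x` in both
balls `closedBall (±h) (‖h‖ + g)`. So everything reduces to showing that these two balls shrink
to `{0}` as `g → 0`. Their limit intersection is `{0}` by strict convexity, hence, by reflexivity
and Banach–Alaoglu, points `yₙ` of the balls with `gₙ → 0` converge weakly to `0`. Then
`yₙ + h ⇀ h` with `‖yₙ + h‖ → ‖h‖`, and property (H) upgrades this to norm convergence.
-/

open Topology

section SemiD1

variable {X : Type*} [NormedAddCommGroup X] (h : X) (d : ℝ) (x y : X)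

lemma semiD1_le_of_norm_sub_le {r : ℝ} (hr : 0 ≤ r) (h₁ : ‖y - (x - h)‖ ≤ d + r)
    (h₂ : ‖y - (x + h)‖ ≤ d + r) : semiD1 h d x y ≤ r :=
  le_of_forall_pos_le_add fun δ hδ =>
    csInf_le ⟨0, fun _ hs => hs.1.le⟩ ⟨by linarith, by linarith, by linarith⟩

lemma semiD1_le_dist : semiD1 h ‖h‖ x y ≤ dist y x := by
  refine semiD1_le_of_norm_sub_le h ‖h‖ x y dist_nonneg ?_ ?_ <;> rw [dist_eq_norm]
  · rw [show y - (x - h) = y - x + h by abel]; linarith [norm_add_le (y - x) h]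
  · rw [show y - (x + h) = y - x - h by abel]; linarith [norm_sub_le (y - x) h]

lemma max_norm_sub_le_add_semiD1 :
    max ‖y - (x - h)‖ ‖y - (x + h)‖ ≤ d + semiD1 h d x y := by
  have hne : {r : ℝ | 0 < r ∧ ‖y - (x - h)‖ ≤ d + r ∧ ‖y - (x + h)‖ ≤ d + r}.Nonempty := by
    refine ⟨‖y - (x - h)‖ + ‖y - (x + h)‖ + |d| + 1, by positivity, ?_, ?_⟩ <;>
      linarith [neg_abs_le d, norm_nonneg (y - (x - h)), norm_nonneg (y - (x + h))]
  rw [← sub_le_iff_le_add']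
  exact le_csInf hne fun r ⟨_, h₁, h₂⟩ => sub_le_iff_le_add'.2 (max_le h₁ h₂)

end SemiD1

section WeakConvergence

variable {X : Type*} [NormedAddCommGroup X] [NormedSpace ℝ X]

lemma ReflexiveSpace.exists_tendsto_dual_of_bounded (hrefl : ReflexiveSpace X) {ι : Type*}
    (U : Ultrafilter ι) {y : ι → X} {R : ℝ} (hy : ∀ i, ‖y i‖ ≤ R) :
    ∃ z : X, ∀ φ : StrongDual ℝ X, Tendsto (fun i => φ (y i)) U (𝓝 (φ z)) := by
  set K := WeakDual.toStrongDual ⁻¹' closedBall (0 : StrongDual ℝ (StrongDual ℝ X)) R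
  let seq : ι → WeakDual ℝ (StrongDual ℝ X) :=
    fun i => StrongDual.toWeakDual (NormedSpace.inclusionInDoubleDual ℝ X (y i))
  have hseq : ∀ i, seq i ∈ K := fun i => Set.mem_preimage.2 <| mem_closedBall.2 <|
    (dist_zero_right (WeakDual.toStrongDual (seq i))).le.trans <|
      (NormedSpace.double_dual_bound ℝ X (y i)).trans (hy i)
  obtain ⟨a, -, ha⟩ := (WeakDual.isCompact_closedBall (𝕜 := ℝ) 0 R).ultrafilter_le_nhds
    (U.map seq) (le_principal_iff.2 (mem_map.2 (univ_mem' hseq)))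
  obtain ⟨z, hz⟩ := hrefl (WeakDual.toStrongDual a)
  refine ⟨z, fun φ => ?_⟩
  have hφ : a φ = φ z := (DFunLike.congr_fun hz φ).symm
  rw [← hφ]
  exact ((WeakDual.eval_continuous φ).tendsto a).comp (by rwa [Ultrafilter.coe_map] at ha)

lemma norm_le_of_tendsto_dual {ι : Type*} {l : Filter ι} [l.NeBot] {y : ι → X} {z : X}
    (hz : ∀ φ : StrongDual ℝ X, Tendsto (fun i => φ (y i)) l (𝓝 (φ z)))
    {b : ι → ℝ} {c : ℝ} (hb : Tendsto b l (𝓝 c)) (hyb : ∀ i, ‖y i‖ ≤ b i) : ‖z‖ ≤ c := by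
  have hc : 0 ≤ c := ge_of_tendsto hb (Eventually.of_forall fun i => (norm_nonneg _).trans (hyb i))
  refine NormedSpace.norm_le_dual_bound ℝ z hc fun φ => ?_
  refine le_of_tendsto_of_tendsto' (hz φ).norm (hb.mul_const ‖φ‖) fun i => ?_
  calc ‖φ (y i)‖ ≤ ‖φ‖ * ‖y i‖ := φ.le_opNorm _
    _ ≤ ‖φ‖ * b i := by gcongr; exact hyb i
    _ = b i * ‖φ‖ := mul_comm _ _

lemma eq_zero_of_norm_add_le_of_norm_sub_le [StrictConvexSpace ℝ X] {h z : X}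
    (h₁ : ‖z + h‖ ≤ ‖h‖) (h₂ : ‖z - h‖ ≤ ‖h‖) : z = 0 := by
  by_contra hz
  have hne : h + z ≠ h - z := fun e => hz (by linear_combination (norm := module) (2⁻¹ : ℝ) • e)
  have hlt := norm_combo_lt_of_ne (r := ‖h‖) (by rwa [add_comm] at h₁)
    (by rwa [norm_sub_rev] at h₂) hne
    (half_pos one_pos) (half_pos one_pos) (add_halves (1 : ℝ))
  rw [show (1 / 2 : ℝ) • (h + z) + (1 / 2 : ℝ) • (h - z) = h by module] at hlt
  exact hlt.false

lemma PropertyH.tendsto_of_weakTendsto_s12 (hH : PropertyH X) {x : ℕ → X} {z : X} (hz : z ≠ 0)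
    (hw : WeakTendsto x z) (hn : Tendsto (fun n => ‖x n‖) atTop (𝓝 ‖z‖)) :
    Tendsto x atTop (𝓝 z) := by
  classical
  -- normalize `x`, patching the finitely many zero terms so that property (H) applies
  let u : ℕ → X := fun n => if x n = 0 then ‖z‖⁻¹ • z else ‖x n‖⁻¹ • x n
  have hu1 : ∀ n, ‖u n‖ = 1 := fun n => by
    by_cases hxn : x n = 0
    · simpa [u, hxn] using norm_smul_inv_norm (𝕜 := ℝ) hz
    · simpa [u, hxn] using norm_smul_inv_norm (𝕜 := ℝ) hxn
  have hev : ∀ᶠ n in atTop, x n ≠ 0 :=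
    (hn.eventually_const_lt (norm_pos_iff.2 hz)).mono fun n hn => norm_pos_iff.1 hn
  have hux : ∀ᶠ n in atTop, u n = ‖x n‖⁻¹ • x n := hev.mono fun n hn => if_neg hn
  have huw : WeakTendsto u (‖z‖⁻¹ • z) := fun φ => by
    refine (tendsto_congr' (f₂ := fun n => φ (‖x n‖⁻¹ • x n))
      (hux.mono fun n hn => congrArg φ hn)).2 ?_
    simpa only [map_smul, smul_eq_mul] using (hn.inv₀ (norm_ne_zero_iff.2 hz)).mul (hw φ)
  have hu := (hH u _ hu1).1 huw
  refine Tendsto.congr' (hev.mono fun n hn => ?_) (by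
    simpa only [smul_inv_smul₀ (norm_ne_zero_iff.2 hz)] using hn.smul hu)
  simp only [u, if_neg hn, smul_inv_smul₀ (norm_ne_zero_iff.2 hn)]

end WeakConvergence

section ShrinkingBalls

variable {X : Type*} [NormedAddCommGroup X] [NormedSpace ℝ X] [StrictConvexSpace ℝ X]
  {h : X} {y : ℕ → X} {G : ℕ → ℝ}

lemma weakTendsto_zero_of_norm_add_le_of_norm_sub_le (hrefl : ReflexiveSpace X)
    (hG : Tendsto G atTop (𝓝 0)) (h₁ : ∀ n, ‖y n + h‖ ≤ ‖h‖ + G n)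
    (h₂ : ∀ n, ‖y n - h‖ ≤ ‖h‖ + G n) : WeakTendsto y 0 := by
  intro φ
  rw [tendsto_iff_ultrafilter]
  intro U hU
  obtain ⟨M, hM⟩ := hG.bddAbove_range
  have hy : ∀ n, ‖y n‖ ≤ 2 * ‖h‖ + M := fun n => by
    have := norm_sub_le (y n + h) h
    rw [add_sub_cancel_right] at this
    linarith [h₁ n, hM (Set.mem_range_self n)]
  obtain ⟨z, hz⟩ := hrefl.exists_tendsto_dual_of_bounded U hy
  have hball : ∀ w, (∀ n, ‖y n + w‖ ≤ ‖h‖ + G n) → ‖z + w‖ ≤ ‖h‖ := fun w hw => by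
    have hGU : Tendsto (fun n => ‖h‖ + G n) U (𝓝 ‖h‖) := by
      simpa using tendsto_const_nhds.add (hG.mono_left hU)
    refine norm_le_of_tendsto_dual (fun ψ => ?_) hGU hw
    simpa only [map_add] using (hz ψ).add_const (ψ w)
  have hz0 : z = 0 := eq_zero_of_norm_add_le_of_norm_sub_le (hball h h₁)
    (by simpa only [sub_eq_add_neg] using hball (-h) (by simpa only [sub_eq_add_neg] using h₂))
  simpa [hz0] using hz φ

lemma tendsto_zero_of_norm_add_le_of_norm_sub_le (hrefl : ReflexiveSpace X) (hH : PropertyH X)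
    (hG : Tendsto G atTop (𝓝 0)) (h₁ : ∀ n, ‖y n + h‖ ≤ ‖h‖ + G n)
    (h₂ : ∀ n, ‖y n - h‖ ≤ ‖h‖ + G n) : Tendsto y atTop (𝓝 0) := by
  rcases eq_or_ne h 0 with rfl | hh
  · exact squeeze_zero_norm (fun n => by simpa using h₁ n) hG
  have hlow : ∀ n, ‖h‖ - G n ≤ ‖y n + h‖ := fun n => by
    have := norm_sub_le (y n + h) (y n - h)
    rw [show y n + h - (y n - h) = (2 : ℝ) • h by module, norm_smul] at this
    norm_num at this
    linarith [h₂ n]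
  have hnorm : Tendsto (fun n => ‖y n + h‖) atTop (𝓝 ‖h‖) :=
    tendsto_of_tendsto_of_tendsto_of_le_of_le (by simpa using tendsto_const_nhds.sub hG)
      (by simpa using tendsto_const_nhds.add hG) hlow h₁
  have hw : WeakTendsto (fun n => y n + h) h := fun φ => by
    simpa using (weakTendsto_zero_of_norm_add_le_of_norm_sub_le hrefl hG h₁ h₂ φ).add_const (φ h)
  simpa using (hH.tendsto_of_weakTendsto_s12 hh hw hnorm).sub_const h

lemma exists_pos_norm_le_of_norm_add_le_of_norm_sub_le (hrefl : ReflexiveSpace X)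
    (hH : PropertyH X) (h : X) {ε : ℝ} (hε : 0 < ε) :
    ∃ g > (0 : ℝ), ∀ y : X, ‖y + h‖ ≤ ‖h‖ + g → ‖y - h‖ ≤ ‖h‖ + g → ‖y‖ ≤ ε := by
  by_contra! hcon
  choose y h₁ h₂ hy using fun n : ℕ => hcon (1 / (n + 1)) Nat.one_div_pos_of_nat
  have hlim := (tendsto_zero_of_norm_add_le_of_norm_sub_le hrefl hH
    tendsto_one_div_add_atTop_nhds_zero_nat h₁ h₂).norm
  rw [norm_zero] at hlim
  obtain ⟨n, hn⟩ := (hlim.eventually_lt_const hε).exists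
  exact (hy n).not_gt hn

end ShrinkingBalls

theorem norm_and_d1_compatible_general {X : Type*} [NormedAddCommGroup X]
    [NormedSpace ℝ X] [StrictConvexSpace ℝ X]
    (hrefl : ReflexiveSpace X) (hH : PropertyH X)
    (A B : Set X) (h : X) (hpar : ProximinalParallel A B h)
    (d : ℝ) (hd : d = setDist A B) :
    ∀ ε > (0 : ℝ), ∀ x ∈ B, ∃ fx > (0 : ℝ), ∃ gx > (0 : ℝ),
      (B ∩ Metric.closedBall x fx ⊆ {y ∈ B | semiD1 h d x y ≤ ε}) ∧
      ({y ∈ B | semiD1 h d x y ≤ gx} ⊆ B ∩ Metric.closedBall x ε) := by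
  obtain rfl : d = ‖h‖ := hd.trans hpar.2.2.symm
  intro ε hε x _
  obtain ⟨g, hg, hsmall⟩ := exists_pos_norm_le_of_norm_add_le_of_norm_sub_le hrefl hH h hε
  refine ⟨ε, hε, g, hg, fun y ⟨hyB, hy⟩ => ⟨hyB, (semiD1_le_dist h x y).trans hy⟩,
    fun y ⟨hyB, hy⟩ => ⟨hyB, ?_⟩⟩
  have hmax : max ‖y - (x - h)‖ ‖y - (x + h)‖ ≤ ‖h‖ + g := by
    linarith [max_norm_sub_le_add_semiD1 h ‖h‖ x y]
  rw [mem_closedBall, dist_eq_norm]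
  apply hsmall
  · rw [show y - x + h = y - (x - h) by abel]; exact (le_max_left _ _).trans hmax
  · rw [show y - x - h = y - (x + h) by abel]; exact (le_max_right _ _).trans hmax

theorem norm_and_d1_compatible {X : Type*} [NormedAddCommGroup X]
    [NormedSpace ℝ X] [CompleteSpace X] [StrictConvexSpace ℝ X]
    (hrefl : ReflexiveSpace X) (hH : PropertyH X)
    (A B : Set X) (h : X) (hpar : ProximinalParallel A B h)
    (C : Set X) (hC : C = (fun a => a + h + h) '' A)
    (hBne : B.Nonempty) (hBclosed : IsClosed B) (hBconv : Convex ℝ B)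
    (d : ℝ) (hd : d = setDist A B) :
    ∀ ε > (0 : ℝ), ∀ x ∈ B, ∃ fx > (0 : ℝ), ∃ gx > (0 : ℝ),
      (B ∩ Metric.closedBall x fx ⊆ {y ∈ B | semiD1 h d x y ≤ ε}) ∧
      ({y ∈ B | semiD1 h d x y ≤ gx} ⊆ B ∩ Metric.closedBall x ε) :=
  norm_and_d1_compatible_general hrefl hH A B h hpar d hd
end

section
/- Let A and B = A + h be proximinal parallel subsets of a Banach space X with ‖h‖ = dist(A,B), let C = A + 2h, and let T be a cyclic contraction on A∪B with constant k ∈ (0,1). Then dist(B,C) = dist(A,B), and the map T̂ : B∪C → B∪C defined by T̂(b) = Tb + 2h for b ∈ B and T̂(c) = T(c−2h) for c ∈ C satisfies T̂(B) ⊆ C, T̂(C) ⊆ B, and ‖T̂(b) − T̂(c)‖ ≤ k·‖b−c‖ + (1−k)·dist(B,C) for all b ∈ B, c ∈ C; that is, T̂ is a cyclic contraction on B∪C. -/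
open Filter Metric

theorem shifted_map_is_cyclic_contraction {X : Type*} [NormedAddCommGroup X]
    [NormedSpace ℝ X] [CompleteSpace X]
    (A B : Set X) (hA : A.Nonempty) (hB : B.Nonempty) (h : X)
    (hpar : ProximinalParallel A B h)
    (C : Set X) (hC : C = (fun a => a + (h + h)) '' A)
    (T : X → X) (k : ℝ) (hk0 : 0 < k) (hk1 : k < 1)
    (hTA : Set.MapsTo T A B) (hTB : Set.MapsTo T B A)
    (hTcontr : ∀ x ∈ A, ∀ y ∈ B, dist (T x) (T y) ≤ k * dist x y + (1 - k) * setDist A B) :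
    setDist B C = setDist A B ∧
      (∀ b ∈ B, T b + (h + h) ∈ C) ∧
      (∀ c ∈ C, T (c - (h + h)) ∈ B) ∧
      ∀ b ∈ B, ∀ c ∈ C,
        ‖(T b + (h + h)) - T (c - (h + h))‖ ≤ k * ‖b - c‖ + (1 - k) * setDist B C := by
  obtain ⟨hsharp, hBA, hnorm⟩ := hpar
  set d : ℝ := setDist A B with hd
  -- every A×B distance is at least d
  have hge : ∀ x ∈ A, ∀ y ∈ B, d ≤ dist x y := by
    intro x hx y hy
    exact csInf_le ⟨0, fun r hr => by
      obtain ⟨u, hu, v, hv, rfl⟩ := hr; exact dist_nonneg⟩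
      (Set.mem_image2_of_mem hx hy)
  -- sharpness: the only point of B at distance d from x ∈ A is x + h
  have near : ∀ x ∈ A, ∀ y ∈ B, dist x y = d → y = x + h := by
    intro x hx y hy hxy
    obtain ⟨ya, hya, rfl⟩ : ∃ a ∈ A, a + h = y := by
      obtain ⟨a, ha, rfl⟩ := hBA ▸ hy; exact ⟨a, ha, rfl⟩
    obtain ⟨p, _, huniq⟩ := hsharp x hx (ya + h) hy
    have hdh : ∀ z : X, dist z (z + h) = d := by
      intro z
      rw [dist_eq_norm]
      simpa using hnorm
    have e1 : p = (ya, x + h) :=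
      (huniq (ya, x + h) ⟨hya, hBA ▸ Set.mem_image_of_mem _ hx, hdh x, hdh ya⟩).symm
    have e2 : p = (ya, ya + h) :=
      (huniq (ya, ya + h) ⟨hya, hy, hxy, hdh ya⟩).symm
    have e3 : x + h = ya + h := congrArg Prod.snd (e1.symm.trans e2)
    exact (add_right_cancel e3).symm ▸ rfl
  -- T commutes with the shift: T x = T (x + h) + h for x ∈ A
  have key : ∀ x ∈ A, T x = T (x + h) + h := by
    intro x hx
    have hxh : x + h ∈ B := hBA ▸ Set.mem_image_of_mem _ hx
    have hdxy : dist x (x + h) = d := by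
      rw [dist_eq_norm]; simpa using hnorm
    have hle : dist (T x) (T (x + h)) ≤ d := by
      have := hTcontr x hx (x + h) hxh
      rw [hdxy] at this
      linarith
    have hge' : d ≤ dist (T (x + h)) (T x) := hge _ (hTB hxh) _ (hTA hx)
    have heq : dist (T (x + h)) (T x) = d := le_antisymm (dist_comm (T x) (T (x+h)) ▸ hle) hge'
    exact near _ (hTB hxh) _ (hTA hx) heq
  -- setDist B C = setDist A B
  have hBC : setDist B C = d := by
    unfold setDist
    congr 1
    ext r
    constructor
    · rintro ⟨y, hy, c, hc, rfl⟩
      obtain ⟨a, ha, rfl⟩ := hBA ▸ hy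
      obtain ⟨a', ha', rfl⟩ := hC ▸ hc
      refine ⟨a, ha, a' + h, hBA ▸ Set.mem_image_of_mem _ ha', ?_⟩
      simp only
      rw [show a' + (h + h) = (a' + h) + h by abel, dist_add_right]
    · rintro ⟨a, ha, y, hy, rfl⟩
      obtain ⟨a', ha', rfl⟩ := hBA ▸ hy
      refine ⟨a + h, hBA ▸ Set.mem_image_of_mem _ ha, a' + (h + h), hC ▸ Set.mem_image_of_mem _ ha', ?_⟩
      simp only
      rw [show a' + (h + h) = (a' + h) + h by abel, dist_add_right]
  refine ⟨hBC, ?_, ?_, ?_⟩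
  · intro b hb
    obtain ⟨a, ha, rfl⟩ := hBA ▸ hb
    exact hC ▸ Set.mem_image_of_mem _ (hTB hb)
  · intro c hc
    obtain ⟨a, ha, rfl⟩ := hC ▸ hc
    have : a + (h + h) - (h + h) = a := by abel
    rw [this]
    exact hTA ha
  · intro b hb c hc
    obtain ⟨ab, hab, rfl⟩ := hBA ▸ hb
    obtain ⟨ac, hac, rfl⟩ := hC ▸ hc
    have e1 : T (ab + h) = T ab - h := by
      rw [key ab hab]; abel
    have e2 : ac + (h + h) - (h + h) = ac := by abel
    rw [e2, key ac hac, e1, hBC]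
    have hcontr := hTcontr ab hab (ac + h) (hBA ▸ Set.mem_image_of_mem _ hac)
    rw [dist_eq_norm, dist_eq_norm] at hcontr
    calc ‖T ab - h + (h + h) - (T (ac + h) + h)‖
        = ‖T ab - T (ac + h)‖ := by congr 1; abel
      _ ≤ k * ‖ab - (ac + h)‖ + (1 - k) * d := hcontr
      _ = k * ‖ab + h - (ac + (h + h))‖ + (1 - k) * d := by
          congr 2
          rw [show ab + h - (ac + (h + h)) = ab - (ac + h) by abel]
end

section
/- Let A and B be nonempty subsets of a metric space (X,d) and let T : A∪B → A∪B be a cyclic contraction. If z, z' ∈ A satisfy T²z = z and T²z' = z', then d(z, Tz') = dist(A,B). -/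
open Filter Metric

theorem dist_of_two_periodic_points {X : Type*} [MetricSpace X]
    (A B : Set X) (hA : A.Nonempty) (hB : B.Nonempty)
    (T : X → X) (hT : CyclicContraction A B T)
    (z z' : X) (hz : z ∈ A) (hz' : z' ∈ A)
    (hzfix : T (T z) = z) (hz'fix : T (T z') = z') :
    dist z (T z') = setDist A B := by
  obtain ⟨hAB, hBA, k, hk0, hk1, hcon⟩ := hT
  have hTz' : T z' ∈ B := hAB hz'
  have hTz : T z ∈ B := hAB hz
  have hTTz' : T (T z') ∈ A := hBA hTz'
  -- lower bound
  have hge : setDist A B ≤ dist z (T z') := by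
    apply csInf_le
    · exact ⟨0, fun r ⟨x, hx, y, hy, h⟩ => h ▸ dist_nonneg⟩
    · exact ⟨z, hz, T z', hTz', rfl⟩
  -- step 1
  have h1 : dist (T z) z' ≤ k * dist z (T z') + (1 - k) * setDist A B := by
    have := hcon z hz (T z') hTz'
    rwa [hz'fix] at this
  -- step 2
  have h2 : dist z (T z') ≤ k * dist (T z) z' + (1 - k) * setDist A B := by
    have := hcon z' hz' (T z) hTz
    rw [hzfix] at this
    calc dist z (T z') = dist (T z') z := dist_comm _ _
      _ ≤ k * dist z' (T z) + (1 - k) * setDist A B := this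
      _ = k * dist (T z) z' + (1 - k) * setDist A B := by rw [dist_comm]
  have hle : dist z (T z') ≤ setDist A B := by
    have h3 : dist z (T z') ≤ k^2 * dist z (T z') + (1 - k^2) * setDist A B := by
      have := h2.trans (by nlinarith : k * dist (T z) z' + (1 - k) * setDist A B ≤
        k * (k * dist z (T z') + (1 - k) * setDist A B) + (1 - k) * setDist A B)
      nlinarith
    have hk2 : k^2 < 1 := by nlinarith
    have h4 : (1 - k^2) * dist z (T z') ≤ (1 - k^2) * setDist A B := by nlinarith
    exact le_of_mul_le_mul_left h4 (by linarith)
  linarith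
end

section
/- Let A and B be nonempty subsets of a metric space (X,d) and let T : A∪B → A∪B be a cyclic contraction with constant r ∈ (0,1). Then for every x ∈ A and all n, k ∈ ℕ, writing m = n + k, one has d(T^{2m}x, T^{2n+1}x) − dist(A,B) ≤ r^{2n}·(d(T^{2k}x, Tx) − dist(A,B)). -/
open Filter Metric

theorem iterates_distance_estimate {X : Type*} [MetricSpace X]
    (A B : Set X) (hA : A.Nonempty) (hB : B.Nonempty)
    (T : X → X) (r : ℝ) (hr0 : 0 < r) (hr1 : r < 1)
    (hTA : Set.MapsTo T A B) (hTB : Set.MapsTo T B A)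
    (hTcontr : ∀ x ∈ A, ∀ y ∈ B, dist (T x) (T y) ≤ r * dist x y + (1 - r) * setDist A B) :
    ∀ x ∈ A, ∀ n k : ℕ,
      dist (T^[2 * (n + k)] x) (T^[2 * n + 1] x) - setDist A B ≤
        r ^ (2 * n) * (dist (T^[2 * k] x) (T x) - setDist A B) := by
  intro x hx n k
  have hmem : ∀ j : ℕ, T^[2 * j] x ∈ A ∧ T^[2 * j + 1] x ∈ B := by
    intro j
    induction j with
    | zero => simpa using ⟨hx, hTA hx⟩
    | succ j ih =>
      have h1 : T^[2 * (j + 1)] x = T (T^[2 * j + 1] x) := by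
        rw [show 2 * (j + 1) = (2 * j + 1) + 1 by ring, Function.iterate_succ_apply']
      have h2 : T^[2 * (j + 1) + 1] x = T (T^[2 * (j + 1)] x) := by
        rw [Function.iterate_succ_apply']
      refine ⟨?_, ?_⟩
      · rw [h1]; exact hTB ih.2
      · rw [h2, h1]; exact hTA (hTB ih.2)
  have key : ∀ u ∈ A, ∀ v ∈ B, dist (T (T u)) (T (T v)) - setDist A B ≤
      r ^ 2 * (dist u v - setDist A B) := by
    intro u hu v hv
    have h1 := hTcontr u hu v hv
    have h2 := hTcontr (T v) (hTB hv) (T u) (hTA hu)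
    rw [dist_comm (T (T v)) (T (T u)), dist_comm (T v) (T u)] at h2
    nlinarith [h1, h2, hr0.le]
  induction n with
  | zero => simp
  | succ n ih =>
    have hu := (hmem (n + k)).1
    have hv := (hmem n).2
    have e1 : T^[2 * (n + 1 + k)] x = T (T (T^[2 * (n + k)] x)) := by
      rw [show 2 * (n + 1 + k) = (2 * (n + k)) + 1 + 1 by ring,
        Function.iterate_succ_apply', Function.iterate_succ_apply']
    have e2 : T^[2 * (n + 1) + 1] x = T (T (T^[2 * n + 1] x)) := by
      rw [show 2 * (n + 1) + 1 = (2 * n + 1) + 1 + 1 by ring,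
        Function.iterate_succ_apply', Function.iterate_succ_apply']
    have hk := key _ hu _ hv
    rw [e1, e2]
    have hpow : r ^ (2 * (n + 1)) = r ^ 2 * r ^ (2 * n) := by ring
    rw [hpow]
    nlinarith [hk, ih, sq_nonneg r, pow_pos hr0 (2 * n)]
end
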